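/- arXiv:1007.4118 — 14 statements merged into one kernel-verified Lean document; each statement's English description precedes it below -/
import Mathlib

section
/- Let (A, μ, α) be a Hom-algebra over a field k of characteristic 0 and let β : A → A be a morphism of Hom-algebras from A to itself (i.e., β(xy) = β(x)β(y) and βα = αβ). Define the Hom-algebra A_β = (A, μ_β, βα) where μ_β(x,y) = β(xy). Then: (1) if A is multiplicative, so is A_β; (2) for all x ∈ A and n ≥ 1, the n-th Hom-power of x in A_β equals β^{n-1}(x^n), where x^n is the n-th Hom-power in A; (3) if A is n-th Hom-power associative, then so is A_β, and hence if A is Hom-power associative, so is A_β. -/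
variable {k A : Type*} [Field k] [CharZero k] [AddCommGroup A] [Module k A]

/-- The `n`-th Hom-power: `x^1 = x`, `x^n = x^{n-1} · α^{n-2}(x)`. -/
def homPow (μ : A →ₗ[k] A →ₗ[k] A) (α : A →ₗ[k] A) (x : A) : ℕ → A
  | 0 => x
  | 1 => x
  | n + 2 => μ (homPow μ α x (n + 1)) ((α ^ n) x)

/-- `A` is `n`-th Hom-power associative. -/
def IsNthHomPowerAssoc (μ : A →ₗ[k] A →ₗ[k] A) (α : A →ₗ[k] A) (n : ℕ) : Prop :=
  ∀ (x : A) (i : ℕ), 1 ≤ i → i ≤ n - 1 →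
    homPow μ α x n =
      μ ((α ^ (n - i - 1)) (homPow μ α x i)) ((α ^ (i - 1)) (homPow μ α x (n - i)))

/-- `A` is Hom-power associative. -/
def IsHomPowerAssoc (μ : A →ₗ[k] A →ₗ[k] A) (α : A →ₗ[k] A) : Prop :=
  ∀ n : ℕ, 2 ≤ n → IsNthHomPowerAssoc μ α n

/-- `A` is up to `n`-th Hom-power associative. -/
def IsUpToNthHomPowerAssoc (μ : A →ₗ[k] A →ₗ[k] A) (α : A →ₗ[k] A) (n : ℕ) : Prop :=
  ∀ m : ℕ, 2 ≤ m → m ≤ n → IsNthHomPowerAssoc μ α m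

/-- The Hom-algebra `(A, μ, α)` is multiplicative. -/
def IsMultiplicative (μ : A →ₗ[k] A →ₗ[k] A) (α : A →ₗ[k] A) : Prop :=
  ∀ x y : A, α (μ x y) = μ (α x) (α y)

/-!
Every product of `A_β = (A, β ∘ μ, β ∘ α)` is a product of `A` followed by `β`, and `β ∘ α` is `α`
followed by `β`. As `β` is multiplicative and commutes with `α`, all copies of `β` can be pushed
to the outside. Both a Hom-power of degree `n` and each product
`α^{n-i-1}(x^i) α^{i-1}(x^{n-i})` then carry exactly `β^{n-1}`, so the Hom-power associativity
identities of `A` transfer to `A_β` by applying `β^{n-1}`.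
-/

section Endomorphisms

variable {R M : Type*} [CommSemiring R] [AddCommMonoid M] [Module R M]

theorem LinearMap.pow_apply_apply_of_apply_apply {μ : M →ₗ[R] M →ₗ[R] M} {β : M →ₗ[R] M}
    (hβμ : ∀ x y, β (μ x y) = μ (β x) (β y)) (m : ℕ) (x y : M) :
    (β ^ m) (μ x y) = μ ((β ^ m) x) ((β ^ m) y) := by
  induction m with
  | zero => rfl
  | succ m ih => rw [pow_succ', Module.End.mul_apply, ih, hβμ]; rfl

theorem LinearMap.comp_pow_apply {α β : M →ₗ[R] M} (h : Commute β α) (a : ℕ) (x : M) :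
    ((β ∘ₗ α) ^ a) x = (β ^ a) ((α ^ a) x) := by
  rw [← Module.End.mul_eq_comp, h.mul_pow, Module.End.mul_apply]

theorem LinearMap.comp_pow_apply_pow_apply {α β : M →ₗ[R] M} (h : Commute β α) (a b : ℕ)
    (x : M) : ((β ∘ₗ α) ^ a) ((β ^ b) x) = (β ^ (a + b)) ((α ^ a) x) := by
  rw [comp_pow_apply h, ← Module.End.mul_apply (α ^ a), (h.pow_pow b a).symm.eq, pow_add]
  rfl

end Endomorphisms

section Twist

omit [CharZero k]

variable {μ : A →ₗ[k] A →ₗ[k] A} {α β : A →ₗ[k] A}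

theorem IsMultiplicative.compr₂_comp (hβμ : ∀ x y, β (μ x y) = μ (β x) (β y))
    (hβα : Commute β α) (hA : IsMultiplicative μ α) :
    IsMultiplicative (μ.compr₂ β) (β ∘ₗ α) := by
  intro x y
  have hαβ (z : A) : α (β z) = β (α z) := (LinearMap.congr_fun hβα.eq z).symm
  simp only [LinearMap.compr₂_apply, LinearMap.comp_apply]
  rw [hαβ, hA, hβμ]

theorem homPow_compr₂_comp (hβμ : ∀ x y, β (μ x y) = μ (β x) (β y)) (hβα : Commute β α)
    (x : A) : ∀ n, homPow (μ.compr₂ β) (β ∘ₗ α) x n = (β ^ (n - 1)) (homPow μ α x n)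
  | 0 | 1 => rfl
  | n + 2 => by
    rw [homPow, homPow, LinearMap.compr₂_apply, homPow_compr₂_comp hβμ hβα x (n + 1),
      LinearMap.comp_pow_apply hβα, Nat.add_sub_cancel,
      ← LinearMap.pow_apply_apply_of_apply_apply hβμ]
    show _ = (β ^ (n + 1)) _
    rw [pow_succ', Module.End.mul_apply]

theorem IsNthHomPowerAssoc.compr₂_comp (hβμ : ∀ x y, β (μ x y) = μ (β x) (β y))
    (hβα : Commute β α) {n : ℕ} (hA : IsNthHomPowerAssoc μ α n) :
    IsNthHomPowerAssoc (μ.compr₂ β) (β ∘ₗ α) n := by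
  intro x i hi hin
  simp only [homPow_compr₂_comp hβμ hβα, LinearMap.compr₂_apply,
    LinearMap.comp_pow_apply_pow_apply hβα]
  rw [show n - i - 1 + (i - 1) = n - 2 by omega, show i - 1 + (n - i - 1) = n - 2 by omega,
    ← LinearMap.pow_apply_apply_of_apply_apply hβμ, ← hA x i hi hin,
    show n - 1 = n - 2 + 1 by omega, pow_succ', Module.End.mul_apply]

end Twist

/-- Theorem: twisting a Hom-power associative algebra along a self-morphism `β`
yields the Hom-algebra `A_β = (A, μ_β = β∘μ, βα)`, which is (1) multiplicative if `A` is,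
(2) has Hom-powers `(x^n)' = β^{n-1}(x^n)`, and (3) is (n-th) Hom-power associative if `A` is. -/
theorem stmt0 (μ : A →ₗ[k] A →ₗ[k] A) (α β : A →ₗ[k] A)
    (hβμ : ∀ x y : A, β (μ x y) = μ (β x) (β y))
    (hβα : ∀ x : A, β (α x) = α (β x)) :
    (IsMultiplicative μ α → IsMultiplicative (μ.compr₂ β) (β ∘ₗ α)) ∧
    (∀ (x : A) (n : ℕ), 1 ≤ n →
      homPow (μ.compr₂ β) (β ∘ₗ α) x n = (β ^ (n - 1)) (homPow μ α x n)) ∧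
    (∀ n : ℕ, IsNthHomPowerAssoc μ α n → IsNthHomPowerAssoc (μ.compr₂ β) (β ∘ₗ α) n) ∧
    (IsHomPowerAssoc μ α → IsHomPowerAssoc (μ.compr₂ β) (β ∘ₗ α)) := by
  have hcomm : Commute β α := LinearMap.ext hβα
  exact ⟨IsMultiplicative.compr₂_comp hβμ hcomm,
    fun x n _ => homPow_compr₂_comp hβμ hcomm x n,
    fun _ => IsNthHomPowerAssoc.compr₂_comp hβμ hcomm,
    fun hA n hn => (hA n hn).compr₂_comp hβμ hcomm⟩
end

section
/- Let (A, μ, α) be a multiplicative Hom-power associative algebra over a field k of characteristic 0. Then for each n ≥ 1, the Hom-algebra A^n = (A, μ_n, α^{2^n}) with multiplication μ_n(x,y) = α^{2^n - 1}(xy) is a multiplicative Hom-power associative algebra. -/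
variable {k A : Type*} [Field k] [CharZero k] [AddCommGroup A] [Module k A]

/-
Write `μ' = α^N ∘ μ` and `α' = α^(N+1)`; the theorem is the case `N = 2^n - 1`.
By multiplicativity the Hom-powers of the derived algebra are twisted Hom-powers of `A`:
`x'^(m+1) = α^(N m)(x^(m+1))`. Writing `n = (a+1) + (b+1)`, both sides of the Hom-power
associativity identity of `(A, μ', α')` for `x` are then `α^(N(a+b+1))` applied to the two
sides of that identity in `A`.
-/

theorem Module.End.pow_apply_pow_apply {R M : Type*} [Semiring R] [AddCommMonoid M] [Module R M]
    (f : Module.End R M) (m n : ℕ) (x : M) : (f ^ m) ((f ^ n) x) = (f ^ (m + n)) x := by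
  rw [pow_add, Module.End.mul_apply]

section

variable {K V : Type*} [Field K] [AddCommGroup V] [Module K V]

theorem isHomPowerAssoc_iff (μ : V →ₗ[K] V →ₗ[K] V) (α : V →ₗ[K] V) :
    IsHomPowerAssoc μ α ↔ ∀ (x : V) (a b : ℕ),
      homPow μ α x (a + b + 2) =
        μ ((α ^ b) (homPow μ α x (a + 1))) ((α ^ a) (homPow μ α x (b + 1))) := by
  constructor
  · intro h x a b
    have h' := h (a + b + 2) (by omega) x (a + 1) (by omega) (by omega)
    rwa [show a + b + 2 - (a + 1) - 1 = b by omega, show a + b + 2 - (a + 1) = b + 1 by omega,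
      Nat.add_sub_cancel] at h'
  · intro h n hn x i hi hin
    obtain ⟨a, b, rfl, rfl⟩ : ∃ a b, i = a + 1 ∧ n = a + b + 2 :=
      ⟨i - 1, n - i - 1, by omega, by omega⟩
    rw [show a + b + 2 - (a + 1) - 1 = b by omega, show a + b + 2 - (a + 1) = b + 1 by omega,
      Nat.add_sub_cancel]
    exact h x a b

namespace IsMultiplicative

variable {μ : V →ₗ[K] V →ₗ[K] V} {α : V →ₗ[K] V}

theorem pow_apply (hmul : IsMultiplicative μ α) (m : ℕ) (x y : V) :
    (α ^ m) (μ x y) = μ ((α ^ m) x) ((α ^ m) y) := by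
  induction m generalizing x y with
  | zero => simp
  | succ m ih => simp only [pow_succ, Module.End.mul_apply, hmul x y, ih]

theorem derived (hmul : IsMultiplicative μ α) (N : ℕ) :
    IsMultiplicative (μ.compr₂ (α ^ N)) (α ^ (N + 1)) := by
  intro x y
  simp only [LinearMap.compr₂_apply]
  rw [Module.End.pow_apply_pow_apply, ← hmul.pow_apply, Module.End.pow_apply_pow_apply,
    add_comm]

theorem homPow_derived (hmul : IsMultiplicative μ α) (N : ℕ) (x : V) (m : ℕ) :
    homPow (μ.compr₂ (α ^ N)) (α ^ (N + 1)) x (m + 1) =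
      (α ^ (N * m)) (homPow μ α x (m + 1)) := by
  induction m with
  | zero => simp [homPow]
  | succ m ih =>
    rw [homPow, ih, LinearMap.compr₂_apply, ← pow_mul,
      show (N + 1) * m = N * m + m by ring, ← Module.End.pow_apply_pow_apply α (N * m) m,
      ← hmul.pow_apply, Module.End.pow_apply_pow_apply, ← homPow, mul_add_one, add_comm]

theorem isHomPowerAssoc_derived (hmul : IsMultiplicative μ α) (hpa : IsHomPowerAssoc μ α)
    (N : ℕ) : IsHomPowerAssoc (μ.compr₂ (α ^ N)) (α ^ (N + 1)) := by
  rw [isHomPowerAssoc_iff] at hpa ⊢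
  intro x a b
  calc homPow (μ.compr₂ (α ^ N)) (α ^ (N + 1)) x (a + b + 1 + 1)
      = (α ^ (N * (a + b + 1))) (homPow μ α x (a + b + 2)) := hmul.homPow_derived N x _
    _ = (α ^ (N * (a + b + 1)))
          (μ ((α ^ b) (homPow μ α x (a + 1))) ((α ^ a) (homPow μ α x (b + 1)))) := by rw [hpa]
    _ = _ := by
      rw [hmul.homPow_derived, hmul.homPow_derived, LinearMap.compr₂_apply, ← pow_mul, ← pow_mul,
        Module.End.pow_apply_pow_apply, Module.End.pow_apply_pow_apply,
        show (N + 1) * b + N * a = N * (a + b) + b by ring,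
        show (N + 1) * a + N * b = N * (a + b) + a by ring,
        ← Module.End.pow_apply_pow_apply α _ b, ← Module.End.pow_apply_pow_apply α _ a,
        ← hmul.pow_apply, Module.End.pow_apply_pow_apply, mul_add_one, add_comm]

end IsMultiplicative

end

/-- Corollary: every multiplicative Hom-power associative algebra `(A,μ,α)` yields
a derived sequence `A^n = (A, α^{2^n-1}∘μ, α^{2^n})` of multiplicative
Hom-power associative algebras. -/
theorem stmt1 (μ : A →ₗ[k] A →ₗ[k] A) (α : A →ₗ[k] A)
    (hmul : IsMultiplicative μ α) (hpa : IsHomPowerAssoc μ α) :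
    ∀ n : ℕ, 1 ≤ n →
      IsMultiplicative (μ.compr₂ (α ^ (2 ^ n - 1))) (α ^ (2 ^ n)) ∧
      IsHomPowerAssoc (μ.compr₂ (α ^ (2 ^ n - 1))) (α ^ (2 ^ n)) := by
  intro n _
  obtain ⟨N, hN⟩ : ∃ N, 2 ^ n = N + 1 := Nat.exists_eq_add_one.mpr (Nat.two_pow_pos n)
  rw [hN, Nat.add_sub_cancel]
  exact ⟨hmul.derived _, hmul.isHomPowerAssoc_derived hpa _⟩
end

section
/- Let (A, μ) be a power associative algebra over a field k of characteristic 0 and let β : A → A be an algebra morphism (β(xy) = β(x)β(y)). Then A_β = (A, μ_β, β) with μ_β(x,y) = β(xy) is a multiplicative Hom-power associative algebra. -/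
variable {k A : Type*} [Field k] [CharZero k] [AddCommGroup A] [Module k A]

/-- The `n`-th right power of `x` in an ordinary algebra: `x^1 = x`, `x^{n+1} = x^n x`. -/
def rightPow (μ : A →ₗ[k] A →ₗ[k] A) (x : A) : ℕ → A
  | 0 => x
  | 1 => x
  | n + 2 => μ (rightPow μ x (n + 1)) x

/-- An ordinary algebra `(A,μ)` is power associative. -/
def IsPowerAssoc (μ : A →ₗ[k] A →ₗ[k] A) : Prop :=
  ∀ (x : A) (n i : ℕ), 2 ≤ n → 1 ≤ i → i ≤ n - 1 →
    rightPow μ x n = μ (rightPow μ x (n - i)) (rightPow μ x i)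

/-! Twisting by `β` only inserts powers of `β`: since `β` and hence every `β ^ j` is multiplicative,
the `n`-th Hom-power of `x` in `A_β` is `β ^ (n - 1)` applied to the ordinary power `x ^ n`, and both
sides of each Hom-power associativity identity are `β ^ (n - 1)` applied to the two sides of an
ordinary power associativity identity. -/

theorem pow_map_mul_of_map_mul {R M : Type*} [CommSemiring R] [AddCommMonoid M] [Module R M]
    {μ : M →ₗ[R] M →ₗ[R] M} {β : M →ₗ[R] M} (hβμ : ∀ x y, β (μ x y) = μ (β x) (β y))
    (n : ℕ) (x y : M) : (β ^ n) (μ x y) = μ ((β ^ n) x) ((β ^ n) y) := by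
  induction n with
  | zero => rfl
  | succ n ih => rw [pow_succ', Module.End.mul_apply, ih, hβμ]; rfl

omit [CharZero k] in
theorem homPow_compr₂_eq {μ : A →ₗ[k] A →ₗ[k] A} {β : A →ₗ[k] A}
    (hβμ : ∀ x y, β (μ x y) = μ (β x) (β y)) (x : A) :
    ∀ n, homPow (μ.compr₂ β) β x n = (β ^ (n - 1)) (rightPow μ x n)
  | 0 | 1 => rfl
  | n + 2 => by
    rw [homPow, rightPow, homPow_compr₂_eq hβμ x (n + 1), Nat.add_sub_cancel,
      LinearMap.compr₂_apply, ← pow_map_mul_of_map_mul hβμ, ← Module.End.mul_apply, ← pow_succ']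
    rfl

omit [CharZero k] in
theorem IsPowerAssoc.rightPow_eq_mul {μ : A →ₗ[k] A →ₗ[k] A} (hpa : IsPowerAssoc μ) (x : A)
    {n i : ℕ} (hi : 1 ≤ i) (hin : i < n) :
    rightPow μ x n = μ (rightPow μ x i) (rightPow μ x (n - i)) := by
  simpa only [Nat.sub_sub_self hin.le] using hpa x n (n - i) (by omega) (by omega) (by omega)

/-- Corollary: if `(A,μ)` is a power associative algebra and `β` is an algebra
morphism, then `A_β = (A, β∘μ, β)` is a multiplicative Hom-power associative algebra. -/
theorem stmt2 (μ : A →ₗ[k] A →ₗ[k] A) (β : A →ₗ[k] A)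
    (hpa : IsPowerAssoc μ)
    (hβμ : ∀ x y : A, β (μ x y) = μ (β x) (β y)) :
    IsMultiplicative (μ.compr₂ β) β ∧ IsHomPowerAssoc (μ.compr₂ β) β := by
  refine ⟨fun x y => by simp only [LinearMap.compr₂_apply, hβμ], fun n hn x i hi hin => ?_⟩
  have pow_apply_pow : ∀ (a b : ℕ) (y : A), (β ^ a) ((β ^ b) y) = (β ^ (a + b)) y :=
    fun a b y => by rw [← Module.End.mul_apply, ← pow_add]
  rw [homPow_compr₂_eq hβμ, homPow_compr₂_eq hβμ, homPow_compr₂_eq hβμ, LinearMap.compr₂_apply,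
    pow_apply_pow, pow_apply_pow, show n - i - 1 + (i - 1) = n - 2 by omega,
    show i - 1 + (n - i - 1) = n - 2 by omega, ← pow_map_mul_of_map_mul hβμ,
    ← hpa.rightPow_eq_mul x hi (by omega), ← Module.End.mul_apply, ← pow_succ',
    show n - 2 + 1 = n - 1 by omega]
end

section
/- Let (A, μ, α) be a Hom-algebra over a field k of characteristic 0 and let k ≥ 2 be an integer. For λ ∈ k define A(λ) = (A, μ_λ, α) where μ_λ(x,y) = λ·xy + (1−λ)·yx. Then: (1) A is up to k-th Hom-power associative if and only if A(λ) is up to k-th Hom-power associative for all λ ∈ k; (2) if A is up to k-th Hom-power associative, then for each l ∈ {1,...,k} the l-th Hom-power of every x in A coincides with its l-th Hom-power in A(λ). -/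
variable {k A : Type*} [Field k] [CharZero k] [AddCommGroup A] [Module k A]

/-! The product `μ_λ(a, b) = λ·ab + (1 - λ)·ba` agrees with `ab` whenever `ab = ba`. Hom-power
associativity at `i` and at `n - i` says precisely that the two factors `α^(n-i-1)(x^i)` and
`α^(i-1)(x^(n-i))` of `x^n` multiply to `x^n` in either order; taking `i = 1` shows by induction that
`A(λ)` has the same Hom-powers as `A`, and then it inherits the associativity. Conversely
`A(1) = A`. -/

section LambdaMul

variable {R M : Type*} [CommRing R] [AddCommGroup M] [Module R M]

/-- The product `μ_λ` of `A(λ)`. -/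
def lambdaMul (lam : R) (μ : M →ₗ[R] M →ₗ[R] M) : M →ₗ[R] M →ₗ[R] M :=
  lam • μ + (1 - lam) • μ.flip

theorem lambdaMul_apply (lam : R) (μ : M →ₗ[R] M →ₗ[R] M) (x y : M) :
    lambdaMul lam μ x y = lam • μ x y + (1 - lam) • μ y x := rfl

theorem lambdaMul_apply_of_eq {lam : R} {μ : M →ₗ[R] M →ₗ[R] M} {x y z : M}
    (hxy : μ x y = z) (hyx : μ y x = z) : lambdaMul lam μ x y = z := by
  rw [lambdaMul_apply, hxy, hyx, ← add_smul, add_sub_cancel, one_smul]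

end LambdaMul

section HomPow

variable {F V : Type*} [Field F] [AddCommGroup V] [Module F V]
  {μ : V →ₗ[F] V →ₗ[F] V} {α : V →ₗ[F] V}

theorem homPow_add_two (x : V) (n : ℕ) :
    homPow μ α x (n + 2) = μ (homPow μ α x (n + 1)) ((α ^ n) x) := rfl

theorem IsNthHomPowerAssoc.apply_comm {n : ℕ} (h : IsNthHomPowerAssoc μ α n)
    (x : V) {i : ℕ} (hi : 1 ≤ i) (hin : i ≤ n - 1) :
    μ ((α ^ (i - 1)) (homPow μ α x (n - i))) ((α ^ (n - i - 1)) (homPow μ α x i)) =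
      homPow μ α x n := by
  have := h x (n - i) (by omega) (by omega)
  rwa [Nat.sub_sub_self (by omega : i ≤ n), eq_comm] at this

namespace IsUpToNthHomPowerAssoc

variable {K : ℕ}

theorem homPow_lambdaMul (h : IsUpToNthHomPowerAssoc μ α K) (lam : F) (x : V) :
    ∀ {l : ℕ}, l ≤ K → homPow (lambdaMul lam μ) α x l = homPow μ α x l
  | 0, _ | 1, _ => rfl
  | n + 2, hl => by
    rw [homPow_add_two, homPow_lambdaMul h lam x (by omega : n + 1 ≤ K)]
    have hcomm := (h (n + 2) (by omega) hl) x 1 le_rfl (by omega)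
    simp only [Nat.sub_self, pow_zero, Module.End.one_apply,
      show n + 2 - 1 = n + 1 by omega] at hcomm
    exact lambdaMul_apply_of_eq (homPow_add_two x n).symm hcomm.symm

theorem lambdaMul (h : IsUpToNthHomPowerAssoc μ α K) (lam : F) :
    IsUpToNthHomPowerAssoc (_root_.lambdaMul lam μ) α K := by
  intro m hm hmK x i hi him
  simp only [h.homPow_lambdaMul lam x hmK, h.homPow_lambdaMul lam x (by omega : i ≤ K),
    h.homPow_lambdaMul lam x (by omega : m - i ≤ K)]
  have hm := h m hm hmK
  exact (lambdaMul_apply_of_eq (hm x i hi him).symm (hm.apply_comm x hi him)).symm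

end IsUpToNthHomPowerAssoc

end HomPow

theorem stmt3_general (μ : A →ₗ[k] A →ₗ[k] A) (α : A →ₗ[k] A) (K : ℕ) :
    (IsUpToNthHomPowerAssoc μ α K ↔
      ∀ lam : k, IsUpToNthHomPowerAssoc (lam • μ + (1 - lam) • μ.flip) α K) ∧
    (IsUpToNthHomPowerAssoc μ α K →
      ∀ (lam : k) (x : A) (l : ℕ), 1 ≤ l → l ≤ K →
        homPow (lam • μ + (1 - lam) • μ.flip) α x l = homPow μ α x l) :=
  ⟨⟨fun h lam => h.lambdaMul lam, fun h => by simpa using h 1⟩,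
    fun h lam x _ _ hl => h.homPow_lambdaMul lam x hl⟩

/-- Theorem: for `K ≥ 2`, (1) `A` is up to `K`-th Hom-power associative iff
`A(λ) = (A, λμ + (1-λ)μᵒᵖ, α)` is up to `K`-th Hom-power associative for all `λ ∈ k`;
(2) if `A` is up to `K`-th Hom-power associative then the `l`-th Hom-powers in `A` and
`A(λ)` coincide for `1 ≤ l ≤ K`. -/
theorem stmt3 (μ : A →ₗ[k] A →ₗ[k] A) (α : A →ₗ[k] A) (K : ℕ) (hK : 2 ≤ K) :
    (IsUpToNthHomPowerAssoc μ α K ↔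
      ∀ lam : k, IsUpToNthHomPowerAssoc (lam • μ + (1 - lam) • μ.flip) α K) ∧
    (IsUpToNthHomPowerAssoc μ α K →
      ∀ (lam : k) (x : A) (l : ℕ), 1 ≤ l → l ≤ K →
        homPow (lam • μ + (1 - lam) • μ.flip) α x l = homPow μ α x l) :=
  stmt3_general μ α K
end

section
/- Let (A, μ, α) be a Hom-algebra over a field k of characteristic 0. Then A is Hom-power associative if and only if for all λ ∈ k the Hom-algebra A(λ) = (A, μ_λ, α), where μ_λ(x,y) = λ·xy + (1−λ)·yx, is Hom-power associative. -/
variable {k A : Type*} [Field k] [CharZero k] [AddCommGroup A] [Module k A]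

/-!
Applying `n`-th Hom-power associativity once with `i` and once with `n - i` shows that the
two factors `α^{n-i-1}(x^i)` and `α^{i-1}(x^{n-i})` commute. So every affine combination of
`μ` and its opposite multiplies them to the same element `x^n`; by induction the mutated
Hom-powers coincide with the original ones, and hence so do both sides of every
Hom-power associativity identity. Conversely, `A(1) = A`.
-/

namespace LinearMap

variable {R M : Type*} [CommRing R] [AddCommGroup M] [Module R M]

def mutation (μ : M →ₗ[R] M →ₗ[R] M) (lam : R) : M →ₗ[R] M →ₗ[R] M :=
  lam • μ + (1 - lam) • μ.flip

variable (μ : M →ₗ[R] M →ₗ[R] M)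

@[simp]
lemma mutation_apply (lam : R) (a b : M) :
    μ.mutation lam a b = lam • μ a b + (1 - lam) • μ b a := by
  simp [mutation]

lemma mutation_apply_of_eq {lam : R} {a b : M} (h : μ a b = μ b a) :
    μ.mutation lam a b = μ a b := by
  rw [mutation_apply, ← h, ← add_smul, add_sub_cancel, one_smul]

end LinearMap

variable {K V : Type*} [Field K] [AddCommGroup V] [Module K V]
  {μ : V →ₗ[K] V →ₗ[K] V} {α : V →ₗ[K] V}

lemma IsNthHomPowerAssoc.homPow_eq_mutation {n : ℕ} (h : IsNthHomPowerAssoc μ α n)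
    (lam : K) (x : V) {i : ℕ} (hi : 1 ≤ i) (hin : i ≤ n - 1) :
    homPow μ α x n =
      μ.mutation lam ((α ^ (n - i - 1)) (homPow μ α x i))
        ((α ^ (i - 1)) (homPow μ α x (n - i))) := by
  have hcomp := h x (n - i) (by omega) (by omega)
  rw [show n - (n - i) = i by omega] at hcomp
  exact (h x i hi hin).trans (μ.mutation_apply_of_eq ((h x i hi hin).symm.trans hcomp)).symm

lemma IsHomPowerAssoc.homPow_mutation (h : IsHomPowerAssoc μ α) (lam : K) (x : V) :
    ∀ n, homPow (μ.mutation lam) α x n = homPow μ α x n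
  | 0 | 1 => rfl
  | n + 2 => by
    have hlast := (h (n + 2) (by omega)).homPow_eq_mutation lam x
      (i := n + 1) (by omega) le_rfl
    simp only [Nat.sub_self, Nat.add_sub_cancel, pow_zero, Module.End.one_apply,
      show n + 2 - (n + 1) = 1 by omega] at hlast
    calc homPow (μ.mutation lam) α x (n + 2)
        = μ.mutation lam (homPow (μ.mutation lam) α x (n + 1)) ((α ^ n) x) := rfl
      _ = μ.mutation lam (homPow μ α x (n + 1)) ((α ^ n) x) := by
        rw [h.homPow_mutation lam x (n + 1)]
      _ = homPow μ α x (n + 2) := hlast.symm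

lemma IsHomPowerAssoc.mutation (h : IsHomPowerAssoc μ α) (lam : K) :
    IsHomPowerAssoc (μ.mutation lam) α := by
  intro n hn x i hi hin
  simp only [h.homPow_mutation]
  exact (h n hn).homPow_eq_mutation lam x hi hin

/-- Corollary: `A` is Hom-power associative iff `A(λ) = (A, λμ + (1-λ)μᵒᵖ, α)` is
Hom-power associative for all `λ ∈ k`. -/
theorem stmt4 (μ : A →ₗ[k] A →ₗ[k] A) (α : A →ₗ[k] A) :
    IsHomPowerAssoc μ α ↔
      ∀ lam : k, IsHomPowerAssoc (lam • μ + (1 - lam) • μ.flip) α :=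
  ⟨fun h lam => h.mutation lam, fun h => by simpa using h 1⟩
end

section
/- Let (A, μ, α) be a Hom-power associative algebra over a field k of characteristic 0. Then A^+ = (A, ∗, α) with x ∗ y = (xy + yx)/2 is a commutative Hom-power associative algebra. -/
variable {k A : Type*} [Field k] [CharZero k] [AddCommGroup A] [Module k A]

/-
Proof idea: Hom-power associativity with `i` and with `n - i` expresses `x^n` as the product of
the same two factors in both orders, so these factors commute under `μ`. On commuting factors the
symmetrized product `x ∗ y = (xy + yx)/2` agrees with `μ`; by induction the Hom-powers of `∗` and
of `μ` coincide, and every identity of Hom-power associativity transfers from `μ` to `∗`.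
-/

section

variable (μ : A →ₗ[k] A →ₗ[k] A) (α : A →ₗ[k] A)

lemma half_smul_add_flip_apply_comm (x y : A) :
    ((2 : k)⁻¹ • (μ + μ.flip)) x y = ((2 : k)⁻¹ • (μ + μ.flip)) y x := by
  simp only [LinearMap.smul_apply, LinearMap.add_apply, LinearMap.flip_apply, add_comm]

lemma half_smul_add_flip_apply_of_comm {x y : A} (hxy : μ x y = μ y x) :
    ((2 : k)⁻¹ • (μ + μ.flip)) x y = μ x y := by
  simp only [LinearMap.smul_apply, LinearMap.add_apply, LinearMap.flip_apply, ← hxy,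
    ← two_smul k, smul_smul, inv_mul_cancel₀ (two_ne_zero (α := k)), one_smul]

lemma IsNthHomPowerAssoc.homPow_eq_swap {n : ℕ} (h : IsNthHomPowerAssoc μ α n) (x : A) {i : ℕ}
    (hi : 1 ≤ i) (hin : i ≤ n - 1) :
    homPow μ α x n =
      μ ((α ^ (i - 1)) (homPow μ α x (n - i))) ((α ^ (n - i - 1)) (homPow μ α x i)) := by
  have := h x (n - i) (by omega) (by omega)
  rwa [Nat.sub_sub_self (by omega)] at this

lemma homPow_half_smul_add_flip (hpa : IsHomPowerAssoc μ α) (x : A) :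
    ∀ n, homPow ((2 : k)⁻¹ • (μ + μ.flip)) α x n = homPow μ α x n
  | 0 => rfl
  | 1 => rfl
  | m + 2 => by
    have hcomm : μ (homPow μ α x (m + 1)) ((α ^ m) x) = μ ((α ^ m) x) (homPow μ α x (m + 1)) := by
      have h := hpa (m + 2) (by omega) x 1 le_rfl (by omega)
      rwa [show m + 2 - 1 - 1 = m by omega, Nat.sub_self, pow_zero] at h
    rw [homPow, homPow_half_smul_add_flip hpa x (m + 1), half_smul_add_flip_apply_of_comm μ hcomm,
      homPow]

end

/-- Corollary: if `A` is Hom-power associative, then `A⁺ = (A, (μ+μᵒᵖ)/2, α)` is a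
commutative Hom-power associative algebra. -/
theorem stmt5 (μ : A →ₗ[k] A →ₗ[k] A) (α : A →ₗ[k] A)
    (hpa : IsHomPowerAssoc μ α) :
    (∀ x y : A, ((2 : k)⁻¹ • (μ + μ.flip)) x y = ((2 : k)⁻¹ • (μ + μ.flip)) y x) ∧
    IsHomPowerAssoc ((2 : k)⁻¹ • (μ + μ.flip)) α := by
  refine ⟨half_smul_add_flip_apply_comm μ, fun n hn x i hi hin => ?_⟩
  simp only [homPow_half_smul_add_flip μ α hpa]
  have hleft := hpa n hn x i hi hin
  have hright := (hpa n hn).homPow_eq_swap μ α x hi hin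
  rw [half_smul_add_flip_apply_of_comm μ (hleft.symm.trans hright), hleft]
end

section
/- Let (A, μ, α) be a Hom-algebra over a field k of characteristic 0. Then the following are equivalent: (1) A is third Hom-power associative, i.e., (xx)α(x) = α(x)(xx) for all x ∈ A; (2) as(x,x,x) = 0 for all x ∈ A; (3) the sum of as∘σ over all six permutations σ ∈ S₃ of the three arguments is identically zero; (4) [x∙y, α(z)] + [z∙x, α(y)] + [y∙z, α(x)] = 0 for all x, y, z ∈ A, where [a,b] = ab − ba and a∙b = ab + ba; (5) the cyclic Hom-associator S(x,y,z) = as(x,y,z) + as(z,x,y) + as(y,z,x) is totally anti-symmetric, i.e., S composed with any permutation σ ∈ S₃ of its arguments equals sign(σ)·S. -/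
variable {k A : Type*} [Field k] [CharZero k] [AddCommGroup A] [Module k A]

/-- The Hom-associator `as(x,y,z) = (xy)α(z) − α(x)(yz)`. -/
def homAssoc (μ : A →ₗ[k] A →ₗ[k] A) (α : A →ₗ[k] A) (x y z : A) : A :=
  μ (μ x y) (α z) - μ (α x) (μ y z)

/-- The cyclic Hom-associator `S(x,y,z) = as(x,y,z) + as(z,x,y) + as(y,z,x)`. -/
def cyclicHomAssoc (μ : A →ₗ[k] A →ₗ[k] A) (α : A →ₗ[k] A) (x y z : A) : A :=
  homAssoc μ α x y z + homAssoc μ α z x y + homAssoc μ α y z x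


section helpers

omit [CharZero k] in
lemma ha_add1 (μ : A →ₗ[k] A →ₗ[k] A) (α : A →ₗ[k] A) (a b y z : A) :
    homAssoc μ α (a + b) y z = homAssoc μ α a y z + homAssoc μ α b y z := by
  simp [homAssoc, map_add, LinearMap.add_apply]; abel

omit [CharZero k] in
lemma ha_add2 (μ : A →ₗ[k] A →ₗ[k] A) (α : A →ₗ[k] A) (x a b z : A) :
    homAssoc μ α x (a + b) z = homAssoc μ α x a z + homAssoc μ α x b z := by
  simp [homAssoc, map_add, LinearMap.add_apply]; abel

omit [CharZero k] in
lemma ha_add3 (μ : A →ₗ[k] A →ₗ[k] A) (α : A →ₗ[k] A) (x y a b : A) :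
    homAssoc μ α x y (a + b) = homAssoc μ α x y a + homAssoc μ α x y b := by
  simp [homAssoc, map_add, LinearMap.add_apply]; abel

omit [CharZero k] in
lemma polar (μ : A →ₗ[k] A →ₗ[k] A) (α : A →ₗ[k] A)
    (h : ∀ x : A, homAssoc μ α x x x = 0) (x y z : A) :
    homAssoc μ α x y z + homAssoc μ α x z y + homAssoc μ α y x z +
      homAssoc μ α y z x + homAssoc μ α z x y + homAssoc μ α z y x = 0 := by
  have key : homAssoc μ α (x+y+z) (x+y+z) (x+y+z)
      - homAssoc μ α (x+y) (x+y) (x+y) - homAssoc μ α (y+z) (y+z) (y+z)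
      - homAssoc μ α (x+z) (x+z) (x+z)
      + homAssoc μ α x x x + homAssoc μ α y y y + homAssoc μ α z z z
      = homAssoc μ α x y z + homAssoc μ α x z y + homAssoc μ α y x z +
        homAssoc μ α y z x + homAssoc μ α z x y + homAssoc μ α z y x := by
    simp only [ha_add1, ha_add2, ha_add3]; abel
  rw [← key, h, h, h, h, h, h, h]; abel

omit [CharZero k] in
lemma cyc_rot (μ : A →ₗ[k] A →ₗ[k] A) (α : A →ₗ[k] A) (x y z : A) :
    cyclicHomAssoc μ α z x y = cyclicHomAssoc μ α x y z := by
  simp [cyclicHomAssoc]; abel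

omit [CharZero k] in
lemma perm_case (μ : A →ₗ[k] A →ₗ[k] A) (α : A →ₗ[k] A)
    (hsw : ∀ a b c : A, cyclicHomAssoc μ α a c b = - cyclicHomAssoc μ α a b c)
    (σ : Equiv.Perm (Fin 3)) (v : Fin 3 → A) :
    cyclicHomAssoc μ α (v (σ 0)) (v (σ 1)) (v (σ 2)) =
      (Equiv.Perm.sign σ : ℤ) • cyclicHomAssoc μ α (v 0) (v 1) (v 2) := by
  have rot := cyc_rot (k := k) μ α
  have hcases : σ = 1 ∨ σ = Equiv.swap 0 1 ∨ σ = Equiv.swap 0 2 ∨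
      σ = Equiv.swap 1 2 ∨ σ = Equiv.swap 0 1 * Equiv.swap 1 2 ∨
      σ = Equiv.swap 1 2 * Equiv.swap 0 1 := by revert σ; decide
  rcases hcases with h | h | h | h | h | h <;> subst h
  · rw [show ((1 : Equiv.Perm (Fin 3)) 0) = 0 from rfl,
      show ((1 : Equiv.Perm (Fin 3)) 1) = 1 from rfl,
      show ((1 : Equiv.Perm (Fin 3)) 2) = 2 from rfl,
      show ((Equiv.Perm.sign (1 : Equiv.Perm (Fin 3)) : ℤ)) = 1 from by decide, one_smul]
  · rw [show ((Equiv.swap 0 1 : Equiv.Perm (Fin 3)) 0) = 1 from by decide,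
      show ((Equiv.swap 0 1 : Equiv.Perm (Fin 3)) 1) = 0 from by decide,
      show ((Equiv.swap 0 1 : Equiv.Perm (Fin 3)) 2) = 2 from by decide,
      show ((Equiv.Perm.sign (Equiv.swap 0 1 : Equiv.Perm (Fin 3)) : ℤ)) = -1 from by decide,
      rot (v 0) (v 2) (v 1), hsw, neg_one_smul]
  · rw [show ((Equiv.swap 0 2 : Equiv.Perm (Fin 3)) 0) = 2 from by decide,
      show ((Equiv.swap 0 2 : Equiv.Perm (Fin 3)) 1) = 1 from by decide,
      show ((Equiv.swap 0 2 : Equiv.Perm (Fin 3)) 2) = 0 from by decide,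
      show ((Equiv.Perm.sign (Equiv.swap 0 2 : Equiv.Perm (Fin 3)) : ℤ)) = -1 from by decide,
      rot (v 1) (v 0) (v 2), rot (v 0) (v 2) (v 1), hsw, neg_one_smul]
  · rw [show ((Equiv.swap 1 2 : Equiv.Perm (Fin 3)) 0) = 0 from by decide,
      show ((Equiv.swap 1 2 : Equiv.Perm (Fin 3)) 1) = 2 from by decide,
      show ((Equiv.swap 1 2 : Equiv.Perm (Fin 3)) 2) = 1 from by decide,
      show ((Equiv.Perm.sign (Equiv.swap 1 2 : Equiv.Perm (Fin 3)) : ℤ)) = -1 from by decide,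
      hsw, neg_one_smul]
  · rw [show ((Equiv.swap 0 1 * Equiv.swap 1 2 : Equiv.Perm (Fin 3)) 0) = 1 from by decide,
      show ((Equiv.swap 0 1 * Equiv.swap 1 2 : Equiv.Perm (Fin 3)) 1) = 2 from by decide,
      show ((Equiv.swap 0 1 * Equiv.swap 1 2 : Equiv.Perm (Fin 3)) 2) = 0 from by decide,
      show ((Equiv.Perm.sign (Equiv.swap 0 1 * Equiv.swap 1 2 : Equiv.Perm (Fin 3)) : ℤ)) = 1
        from by decide, rot (v 2) (v 0) (v 1), rot (v 0) (v 1) (v 2), one_smul]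
  · rw [show ((Equiv.swap 1 2 * Equiv.swap 0 1 : Equiv.Perm (Fin 3)) 0) = 2 from by decide,
      show ((Equiv.swap 1 2 * Equiv.swap 0 1 : Equiv.Perm (Fin 3)) 1) = 0 from by decide,
      show ((Equiv.swap 1 2 * Equiv.swap 0 1 : Equiv.Perm (Fin 3)) 2) = 1 from by decide,
      show ((Equiv.Perm.sign (Equiv.swap 1 2 * Equiv.swap 0 1 : Equiv.Perm (Fin 3)) : ℤ)) = 1
        from by decide, rot (v 0) (v 1) (v 2), one_smul]
end helpers

/-- Theorem: the five characterizations of third Hom-power associativity are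
equivalent:  (1) `(xx)α(x) = α(x)(xx)`;  (2) `as(x,x,x) = 0`;  (3) the sum of `as∘σ`
over all `σ ∈ S₃` vanishes;  (4) `[x∙y,α(z)] + [z∙x,α(y)] + [y∙z,α(x)] = 0`;
(5) the cyclic Hom-associator is totally anti-symmetric. -/
theorem stmt6 (μ : A →ₗ[k] A →ₗ[k] A) (α : A →ₗ[k] A) :
    ((∀ x : A, μ (μ x x) (α x) = μ (α x) (μ x x)) ↔
      (∀ x : A, homAssoc μ α x x x = 0)) ∧
    ((∀ x : A, homAssoc μ α x x x = 0) ↔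
      (∀ x y z : A,
        homAssoc μ α x y z + homAssoc μ α x z y + homAssoc μ α y x z +
          homAssoc μ α y z x + homAssoc μ α z x y + homAssoc μ α z y x = 0)) ∧
    ((∀ x y z : A,
        homAssoc μ α x y z + homAssoc μ α x z y + homAssoc μ α y x z +
          homAssoc μ α y z x + homAssoc μ α z x y + homAssoc μ α z y x = 0) ↔
      (∀ x y z : A,
        (μ (μ x y + μ y x) (α z) - μ (α z) (μ x y + μ y x)) +
          (μ (μ z x + μ x z) (α y) - μ (α y) (μ z x + μ x z)) +
          (μ (μ y z + μ z y) (α x) - μ (α x) (μ y z + μ z y)) = 0)) ∧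
    ((∀ x y z : A,
        (μ (μ x y + μ y x) (α z) - μ (α z) (μ x y + μ y x)) +
          (μ (μ z x + μ x z) (α y) - μ (α y) (μ z x + μ x z)) +
          (μ (μ y z + μ z y) (α x) - μ (α x) (μ y z + μ z y)) = 0) ↔
      (∀ (σ : Equiv.Perm (Fin 3)) (v : Fin 3 → A),
        cyclicHomAssoc μ α (v (σ 0)) (v (σ 1)) (v (σ 2)) =
          (Equiv.Perm.sign σ : ℤ) • cyclicHomAssoc μ α (v 0) (v 1) (v 2))) := by
  refine ⟨?_, ?_, ?_, ?_⟩
  · constructor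
    · intro h x
      simp [homAssoc, h x]
    · intro h x
      have := h x
      simp only [homAssoc, sub_eq_zero] at this
      exact this
  · constructor
    · exact fun h => polar μ α h
    · intro h x
      have e := h x x x
      have e6 : (6 : k) • homAssoc μ α x x x = 0 := by
        rw [show (6 : k) • homAssoc μ α x x x =
          homAssoc μ α x x x + homAssoc μ α x x x + homAssoc μ α x x x +
            homAssoc μ α x x x + homAssoc μ α x x x + homAssoc μ α x x x by module]
        exact e
      rcases smul_eq_zero.mp e6 with h6 | h0
      · exact absurd h6 (by norm_num)
      · exact h0
  · constructor
    · intro h x y z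
      have e := h x y z
      simp only [homAssoc, map_add, LinearMap.add_apply] at e ⊢
      rw [← e]; abel
    · intro h x y z
      have e := h x y z
      simp only [homAssoc, map_add, LinearMap.add_apply] at e ⊢
      rw [← e]; abel
  · have key : ∀ h : (∀ x y z : A,
        homAssoc μ α x y z + homAssoc μ α x z y + homAssoc μ α y x z +
          homAssoc μ α y z x + homAssoc μ α z x y + homAssoc μ α z y x = 0),
        ∀ a b c : A, cyclicHomAssoc μ α a c b = - cyclicHomAssoc μ α a b c := by
      intro h a b c
      have e := h a b c
      rw [eq_neg_iff_add_eq_zero, ← e]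
      simp only [cyclicHomAssoc]; abel
    have bracket_iff : ∀ x y z : A,
        ((μ (μ x y + μ y x) (α z) - μ (α z) (μ x y + μ y x)) +
          (μ (μ z x + μ x z) (α y) - μ (α y) (μ z x + μ x z)) +
          (μ (μ y z + μ z y) (α x) - μ (α x) (μ y z + μ z y)) =
        homAssoc μ α x y z + homAssoc μ α x z y + homAssoc μ α y x z +
          homAssoc μ α y z x + homAssoc μ α z x y + homAssoc μ α z y x) := by
      intro x y z
      simp only [homAssoc, map_add, LinearMap.add_apply]; abel
    constructor
    · intro h
      refine perm_case μ α (key ?_)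
      intro x y z
      rw [← bracket_iff]; exact h x y z
    · intro h x y z
      rw [bracket_iff]
      have e := h (Equiv.swap 1 2) ![x, y, z]
      rw [show ((Equiv.swap 1 2 : Equiv.Perm (Fin 3)) 0) = 0 from by decide,
        show ((Equiv.swap 1 2 : Equiv.Perm (Fin 3)) 1) = 2 from by decide,
        show ((Equiv.swap 1 2 : Equiv.Perm (Fin 3)) 2) = 1 from by decide,
        show ((Equiv.Perm.sign (Equiv.swap 1 2 : Equiv.Perm (Fin 3)) : ℤ)) = -1 from by decide,
        neg_one_smul] at e
      simp only [Matrix.cons_val_zero, Matrix.cons_val_one, Matrix.head_cons,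
        Matrix.cons_val_two, Matrix.tail_cons] at e
      have e2 : cyclicHomAssoc μ α x z y + cyclicHomAssoc μ α x y z = 0 := by
        rw [e]; abel
      simp only [cyclicHomAssoc] at e2
      rw [← e2]; abel
end

section
/- Let (A, μ, α) be a multiplicative Hom-algebra over a field k of characteristic 0 that is up to (n−1)-st Hom-power associative for some n ≥ 4. Then for all x ∈ A and all λ ∈ {1,...,n−1}, the elements α^{λ−1}(x^{n−λ}) and α^{n−λ−1}(x^{λ}) commute: α^{λ−1}(x^{n−λ})·α^{n−λ−1}(x^{λ}) = α^{n−λ−1}(x^{λ})·α^{λ−1}(x^{n−λ}). -/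
/-! Write `u(p, q) = α^{q-1}(x^p) · α^{p-1}(x^q)` (`homPowSplit`) for `p + q = n`. For
`i + j = n - 1`, the elements `a = α^{j-1}(x^i)`, `b = α^{i+j-2}(x)`, `c = α^{i-1}(x^j)` commute
pairwise by lower Hom-power associativity, and their pairwise products are again twisted powers
of `x`. Linearizing `(y y) α(y) = α(y) (y y)` (third Hom-power associativity) at `a, b, c`
therefore shows that `d(m) = u(m, n - m) - u(n - m, m)` satisfies `d(m + 1) = d(m) + d(1)`.
Hence `d(m) = m • d(1)`; as `d(n - 1) = -d(1)`, we get `n • d(1) = 0`, so `d = 0` in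
characteristic zero. -/

variable {k A : Type*} [Field k] [CharZero k] [AddCommGroup A] [Module k A]

theorem cyclic_sum_mul_map_eq_of_commute {R M : Type*} [CommSemiring R] [AddCommGroup M]
    [Module R M] [IsAddTorsionFree M] {μ : M →ₗ[R] M →ₗ[R] M} {α : M →ₗ[R] M}
    (h : ∀ y, μ (μ y y) (α y) = μ (α y) (μ y y))
    {a b c : M} (hab : μ a b = μ b a) (hbc : μ b c = μ c b) (hca : μ c a = μ a c) :
    μ (μ a b) (α c) + μ (μ b c) (α a) + μ (μ c a) (α b) =
      μ (α c) (μ a b) + μ (α a) (μ b c) + μ (α b) (μ c a) := by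
  have habc := h (a + b + c)
  have hab' := h (a + b)
  have hbc' := h (b + c)
  have hca' := h (c + a)
  simp only [map_add, LinearMap.add_apply, ← hab, ← hbc, ← hca] at habc hab' hbc' hca'
  refine nsmul_right_injective two_ne_zero ?_
  simp only [two_nsmul]
  linear_combination (norm := abel) habc - hab' - hbc' - hca' + h a + h b + h c

theorem eq_swap_of_cyclic_sum_eq {M : Type*} [AddCommGroup M] [IsAddTorsionFree M]
    (f : ℕ → ℕ → M) (n : ℕ)
    (h : ∀ i j, 1 ≤ i → 1 ≤ j → i + j + 1 = n →
      f (i + 1) j + f (j + 1) i + f (i + j) 1 = f j (i + 1) + f i (j + 1) + f 1 (i + j))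
    {p q : ℕ} (hp : 1 ≤ p) (hq : 1 ≤ q) (hpq : p + q = n) : f p q = f q p := by
  set d : ℕ → M := fun m => f m (n - m) - f (n - m) m with hd
  have hd_succ : ∀ m, 1 ≤ m → m + 1 < n → d (m + 1) = d m + d 1 := by
    intro m hm hmn
    have e := h m (n - (m + 1)) hm (by omega) (by omega)
    rw [show n - (m + 1) + 1 = n - m by omega, show m + (n - (m + 1)) = n - 1 by omega] at e
    simp only [hd]
    linear_combination (norm := abel) e
  have hd_eq_nsmul : ∀ m, 1 ≤ m → m < n → d m = m • d 1 := by
    intro m hm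
    induction m, hm using Nat.le_induction with
    | base => simp
    | succ m hm ih =>
      intro hmn
      rw [hd_succ m hm hmn, ih (by omega), succ_nsmul]
  have hd1 : d 1 = 0 := by
    have hlast := hd_eq_nsmul (n - 1) (by omega) (by omega)
    have hswap : d (n - 1) = - d 1 := by
      simp only [hd, show n - (n - 1) = 1 by omega, neg_sub]
    refine (nsmul_eq_zero_iff_right (n := n) (by omega)).1 ?_
    rw [show n = (n - 1) + 1 by omega, succ_nsmul, ← hlast, hswap, neg_add_cancel]
  have hdp := hd_eq_nsmul p hp (by omega)
  rwa [hd1, smul_zero, hd, sub_eq_zero, show n - p = q by omega] at hdp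

section

variable {μ : A →ₗ[k] A →ₗ[k] A} {α : A →ₗ[k] A}

omit [CharZero k]

theorem IsMultiplicative.pow_apply_s8 (hmul : IsMultiplicative μ α) (s : ℕ) (u v : A) :
    (α ^ s) (μ u v) = μ ((α ^ s) u) ((α ^ s) v) := by
  induction s with
  | zero => simp
  | succ s ih => rw [pow_succ', Module.End.mul_apply, ih, hmul]; rfl

theorem IsNthHomPowerAssoc.mul_self_mul_map_comm (h3 : IsNthHomPowerAssoc μ α 3) (y : A) :
    μ (μ y y) (α y) = μ (α y) (μ y y) := by
  simpa [homPow] using h3 y 1 le_rfl (by norm_num)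

theorem IsUpToNthHomPowerAssoc.mono {N N' : ℕ} (hpa : IsUpToNthHomPowerAssoc μ α N)
    (hN : N' ≤ N) : IsUpToNthHomPowerAssoc μ α N' :=
  fun m hm hmN => hpa m hm (hmN.trans hN)

theorem IsUpToNthHomPowerAssoc.map_pow_homPow_mul {N : ℕ} (hmul : IsMultiplicative μ α)
    (hpa : IsUpToNthHomPowerAssoc μ α N) (x : A) {p q r s e₁ e₂ : ℕ} (hp : 1 ≤ p) (hq : 1 ≤ q)
    (hr : p + q = r) (hrN : r ≤ N) (he₁ : e₁ + 1 = q + s) (he₂ : e₂ + 1 = p + s) :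
    μ ((α ^ e₁) (homPow μ α x p)) ((α ^ e₂) (homPow μ α x q)) = (α ^ s) (homPow μ α x r) := by
  subst hr
  rw [hpa (p + q) (by omega) hrN x p hp (by omega), hmul.pow_apply_s8,
    ← Module.End.mul_apply (α ^ s), ← Module.End.mul_apply (α ^ s), ← pow_add, ← pow_add,
    Nat.add_sub_cancel_left, show s + (q - 1) = e₁ by omega, show s + (p - 1) = e₂ by omega]

variable (μ α) in
def homPowSplit (x : A) (p q : ℕ) : A :=
  μ ((α ^ (q - 1)) (homPow μ α x p)) ((α ^ (p - 1)) (homPow μ α x q))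

end

theorem homPowSplit_cyclic_sum_eq {μ : A →ₗ[k] A →ₗ[k] A} {α : A →ₗ[k] A}
    (hmul : IsMultiplicative μ α) (h3 : IsNthHomPowerAssoc μ α 3)
    {i j : ℕ} (hpa : IsUpToNthHomPowerAssoc μ α (i + j)) (x : A) (hi : 1 ≤ i) (hj : 1 ≤ j) :
    homPowSplit μ α x (i + 1) j + homPowSplit μ α x (j + 1) i + homPowSplit μ α x (i + j) 1 =
      homPowSplit μ α x j (i + 1) + homPowSplit μ α x i (j + 1) +
        homPowSplit μ α x 1 (i + j) := by
  have : IsAddTorsionFree A := IsAddTorsionFree.of_isTorsionFree k A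
  set a := (α ^ (j - 1)) (homPow μ α x i)
  set b := (α ^ (i + j - 2)) (homPow μ α x 1)
  set c := (α ^ (i - 1)) (homPow μ α x j)
  have hab : μ a b = (α ^ (j - 1)) (homPow μ α x (i + 1)) :=
    hpa.map_pow_homPow_mul hmul x hi le_rfl rfl (by omega) (by omega) (by omega)
  have hba : μ b a = (α ^ (j - 1)) (homPow μ α x (i + 1)) :=
    hpa.map_pow_homPow_mul hmul x le_rfl hi (by omega) (by omega) (by omega) (by omega)
  have hbc : μ b c = (α ^ (i - 1)) (homPow μ α x (j + 1)) :=
    hpa.map_pow_homPow_mul hmul x le_rfl hj (by omega) (by omega) (by omega) (by omega)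
  have hcb : μ c b = (α ^ (i - 1)) (homPow μ α x (j + 1)) :=
    hpa.map_pow_homPow_mul hmul x hj le_rfl rfl (by omega) (by omega) (by omega)
  have hca : μ c a = (α ^ 0) (homPow μ α x (i + j)) :=
    hpa.map_pow_homPow_mul hmul x hj hi (by omega) le_rfl (by omega) (by omega)
  have hac : μ a c = (α ^ 0) (homPow μ α x (i + j)) :=
    hpa.map_pow_homPow_mul hmul x hi hj rfl le_rfl (by omega) (by omega)
  have key := cyclic_sum_mul_map_eq_of_commute h3.mul_self_mul_map_comm
    (hab.trans hba.symm) (hbc.trans hcb.symm) (hca.trans hac.symm)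
  have hα : ∀ e y, α ((α ^ e) y) = (α ^ (e + 1)) y := fun e y => by
    rw [pow_succ', Module.End.mul_apply]
  rw [hab, hbc, hca, hα, hα, hα, show j - 1 + 1 = j by omega, show i - 1 + 1 = i by omega,
    show i + j - 2 + 1 = i + j - 1 by omega] at key
  simpa [homPowSplit, add_comm, add_left_comm, add_assoc] using key

/-- Proposition: in a multiplicative up to `(n−1)`-st Hom-power associative algebra
(`n ≥ 4`), the elements `α^{λ−1}(x^{n−λ})` and `α^{n−λ−1}(x^{λ})` commute for
`1 ≤ λ ≤ n−1`. -/
theorem stmt8 (μ : A →ₗ[k] A →ₗ[k] A) (α : A →ₗ[k] A) (n : ℕ) (hn : 4 ≤ n)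
    (hmul : IsMultiplicative μ α)
    (hpa : IsUpToNthHomPowerAssoc μ α (n - 1)) :
    ∀ (x : A) (l : ℕ), 1 ≤ l → l ≤ n - 1 →
      μ ((α ^ (l - 1)) (homPow μ α x (n - l))) ((α ^ (n - l - 1)) (homPow μ α x l)) =
        μ ((α ^ (n - l - 1)) (homPow μ α x l)) ((α ^ (l - 1)) (homPow μ α x (n - l))) := by
  intro x l hl hln
  have : IsAddTorsionFree A := IsAddTorsionFree.of_isTorsionFree k A
  refine eq_swap_of_cyclic_sum_eq (homPowSplit μ α x) n (p := n - l) (q := l)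
    (fun i j hi hj hij => ?_) (by omega) hl (by omega)
  exact homPowSplit_cyclic_sum_eq hmul (hpa 3 (by norm_num) (by omega)) (hpa.mono (by omega)) x
    hi hj
end

section
/- Let (A, μ, α) be a Hom-algebra over a field k of characteristic 0. Then A is A₃-Hom-associative (i.e., as(x,y,z) + as(z,x,y) + as(y,z,x) = 0 for all x, y, z ∈ A) if and only if A is both third Hom-power associative and Hom-Lie admissible. -/
variable {k A : Type*} [Field k] [CharZero k] [AddCommGroup A] [Module k A]

/-- The commutator `[x,y] = xy − yx`. -/
def homComm (μ : A →ₗ[k] A →ₗ[k] A) (x y : A) : A :=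
  μ x y - μ y x

/-- The Jacobi-type expression for the commutator equals the difference of two
cyclic sums of Hom-associators. -/
lemma jacobi_eq_P_sub_P (μ : A →ₗ[k] A →ₗ[k] A) (α : A →ₗ[k] A) (x y z : A) :
    homComm μ (homComm μ x y) (α z) + homComm μ (homComm μ z x) (α y) +
        homComm μ (homComm μ y z) (α x) =
      (homAssoc μ α x y z + homAssoc μ α z x y + homAssoc μ α y z x) -
        (homAssoc μ α x z y + homAssoc μ α y x z + homAssoc μ α z y x) := by
  simp only [homComm, homAssoc, map_sub, LinearMap.sub_apply]
  abel

/-- Theorem: `A` is `A₃`-Hom-associative iff it is both third Hom-power associative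
and Hom-Lie admissible (i.e., the commutator Hom-algebra `A⁻` is a Hom-Lie algebra). -/
theorem stmt9 (μ : A →ₗ[k] A →ₗ[k] A) (α : A →ₗ[k] A) :
    (∀ x y z : A,
        homAssoc μ α x y z + homAssoc μ α z x y + homAssoc μ α y z x = 0) ↔
      ((∀ x : A, μ (μ x x) (α x) = μ (α x) (μ x x)) ∧
        ((∀ x y : A, homComm μ x y = -homComm μ y x) ∧
          (∀ x y z : A,
            homComm μ (homComm μ x y) (α z) + homComm μ (homComm μ z x) (α y) +
              homComm μ (homComm μ y z) (α x) = 0))) := by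
  constructor
  · intro h
    refine ⟨?_, ?_, ?_⟩
    · intro x
      have h1 := h x x x
      simp only [homAssoc] at h1
      set d := μ (μ x x) (α x) - μ (α x) (μ x x) with hd
      have h3 : (3 : k) • d = 0 := by
        rw [show (3 : k) = 2 + 1 by norm_num, add_smul, two_smul, one_smul]
        rw [← h1]
      have : d = 0 := by
        rcases smul_eq_zero.mp h3 with h | h
        · exact absurd h (by norm_num)
        · exact h
      exact sub_eq_zero.mp this
    · intro x y
      simp only [homComm]; abel
    · intro x y z
      rw [jacobi_eq_P_sub_P, h x y z, h x z y, sub_zero]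
  · rintro ⟨hp, -, hjac⟩
    -- as(x,x,x) = 0
    have hA : ∀ x : A, homAssoc μ α x x x = 0 := fun x => sub_eq_zero.mpr (hp x)
    intro x y z
    -- full polarization: the sum over all six permutations vanishes
    have hQ : homAssoc μ α x y z + homAssoc μ α x z y + homAssoc μ α y x z +
        homAssoc μ α y z x + homAssoc μ α z x y + homAssoc μ α z y x = 0 := by
      have e : homAssoc μ α (x + y + z) (x + y + z) (x + y + z)
            - homAssoc μ α (x + y) (x + y) (x + y)
            - homAssoc μ α (x + z) (x + z) (x + z)
            - homAssoc μ α (y + z) (y + z) (y + z)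
            + homAssoc μ α x x x + homAssoc μ α y y y + homAssoc μ α z z z =
          homAssoc μ α x y z + homAssoc μ α x z y + homAssoc μ α y x z +
            homAssoc μ α y z x + homAssoc μ α z x y + homAssoc μ α z y x := by
        simp only [homAssoc, map_add, LinearMap.add_apply]
        abel
      rw [← e, hA, hA, hA, hA, hA, hA, hA]
      abel
    -- symmetry from the Jacobi identity
    have hS : homAssoc μ α x z y + homAssoc μ α y x z + homAssoc μ α z y x =
        homAssoc μ α x y z + homAssoc μ α z x y + homAssoc μ α y z x := by
      have := hjac x y z
      rw [jacobi_eq_P_sub_P] at this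
      exact (sub_eq_zero.mp this).symm
    have h2 : (2 : k) • (homAssoc μ α x y z + homAssoc μ α z x y + homAssoc μ α y z x) = 0 := by
      rw [two_smul]
      nth_rewrite 2 [← hS]
      rw [← hQ]
      abel
    rcases smul_eq_zero.mp h2 with h | h
    · exact absurd h (by norm_num)
    · exact h
end

section
/- Let (A, μ, α) be a multiplicative third Hom-power associative Hom-algebra over a field k of characteristic 0. Then x⁴ = x³α²(x) = α²(x)x³ for all x ∈ A, where x² = xx, x³ = x²α(x), and x⁴ = x³α²(x). -/
variable {k A : Type*} [Field k] [CharZero k] [AddCommGroup A] [Module k A]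

/-! Put `a = xx` and `b = α(x)`, so that the claim is `(ab)α(b) = α(b)(ab)`. The identity
`(yy)α(y) = α(y)(yy)` is cubic in `y`; its part quadratic in `b` and linear in `a`, extracted
from `y = a ± b` using `2 ≠ 0`, reads `(ab + ba)α(b) + (bb)α(a) = α(b)(ab + ba) + α(a)(bb)`.
Multiplicativity gives `α(a) = bb`, and the identity for `y = x` gives `ba = ab`, which turns
it into `2(ab)α(b) = 2α(b)(ab)`. -/

section ThirdHomPowerAssoc

variable (μ : A →ₗ[k] A →ₗ[k] A) (α : A →ₗ[k] A)

theorem third_homPowerAssoc_polarization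
    (h3 : ∀ y : A, μ (μ y y) (α y) = μ (α y) (μ y y)) (a b : A) :
    μ (μ a b + μ b a) (α b) + μ (μ b b) (α a) =
      μ (α b) (μ a b + μ b a) + μ (α a) (μ b b) := by
  have hplus := h3 (a + b)
  have hminus := h3 (a - b)
  have ha := h3 a
  simp only [map_add, map_sub, LinearMap.add_apply, LinearMap.sub_apply] at hplus hminus ⊢
  have htwice : (2 : k) • (μ (μ a b) (α b) + μ (μ b a) (α b) + μ (μ b b) (α a)) =
      (2 : k) • (μ (α b) (μ a b) + μ (α b) (μ b a) + μ (α a) (μ b b)) := by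
    linear_combination (norm := module) hplus + hminus - 2 • ha
  exact smul_right_injective A two_ne_zero htwice

theorem homPow_three_commute_alpha_sq (hmul : IsMultiplicative μ α)
    (h3 : ∀ y : A, μ (μ y y) (α y) = μ (α y) (μ y y)) (x : A) :
    μ (homPow μ α x 3) ((α ^ 2) x) = μ ((α ^ 2) x) (homPow μ α x 3) := by
  change μ (μ (μ x x) (α x)) (α (α x)) = μ (α (α x)) (μ (μ x x) (α x))
  have hpol := third_homPowerAssoc_polarization μ α h3 (μ x x) (α x)
  rw [hmul, ← h3 x, add_left_inj, ← two_smul k, map_smul, LinearMap.smul_apply,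
    map_smul] at hpol
  exact smul_right_injective A two_ne_zero hpol

end ThirdHomPowerAssoc

/-- Corollary: in a multiplicative third Hom-power associative algebra,
`x⁴ = x³α²(x) = α²(x)x³` for all `x`. -/
theorem stmt11 (μ : A →ₗ[k] A →ₗ[k] A) (α : A →ₗ[k] A)
    (hmul : IsMultiplicative μ α)
    (h3 : ∀ x : A, μ (μ x x) (α x) = μ (α x) (μ x x)) :
    ∀ x : A,
      homPow μ α x 4 = μ (homPow μ α x 3) ((α ^ 2) x) ∧
      homPow μ α x 4 = μ ((α ^ 2) x) (homPow μ α x 3) :=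
  fun x => ⟨rfl, homPow_three_commute_alpha_sq μ α hmul h3 x⟩
end

section
/- Let (A, μ, α) be a multiplicative Hom-algebra over a field k of characteristic 0. Then the following are equivalent: (1) x²α(x) = α(x)x² and x⁴ = α(x²)α(x²) for all x ∈ A; (2) as(x,x,x) = 0 and as(x², α(x), α(x)) = 0 for all x ∈ A; (3) A is up to fourth Hom-power associative. -/
variable {k A : Type*} [Field k] [CharZero k] [AddCommGroup A] [Module k A]

/-!
(1) and (2) are the same identities written with the Hom-associator, and third Hom-power
associativity is `as(x,x,x) = 0`. Fourth Hom-power associativity consists of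
`x⁴ = α(x²)α(x²)`, i.e. `as(x², α(x), α(x)) = 0`, and `x⁴ = α²(x)x³`. The latter follows from
third Hom-power associativity: linearize `x²α(x) = α(x)x²` at `(x², α(x))` and use
multiplicativity.
-/

section HomPower

variable {K V : Type*} [Field K] [AddCommGroup V] [Module K V]
  (μ : V →ₗ[K] V →ₗ[K] V) (α : V →ₗ[K] V)

lemma homPow_three (x : V) : homPow μ α x 3 = μ (μ x x) (α x) := rfl

lemma homPow_four (x : V) :
    homPow μ α x 4 = μ (μ (μ x x) (α x)) (α (α x)) := rfl

lemma homAssoc_self_eq_zero_iff (x : V) :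
    homAssoc μ α x x x = 0 ↔ μ (μ x x) (α x) = μ (α x) (μ x x) :=
  sub_eq_zero

lemma homAssoc_sq_eq_zero_iff (hmul : IsMultiplicative μ α) (x : V) :
    homAssoc μ α (μ x x) (α x) (α x) = 0 ↔
      homPow μ α x 4 = μ (α (μ x x)) (α (μ x x)) := by
  rw [homAssoc, sub_eq_zero, ← hmul x x, homPow_four]

/-- The part of degree one in `a` of the identity at `a + b`. -/
lemma sq_mul_comm_linearize [NeZero (2 : K)]
    (hcomm : ∀ x : V, μ (μ x x) (α x) = μ (α x) (μ x x)) (a b : V) :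
    μ (μ a b) (α b) + μ (μ b a) (α b) + μ (μ b b) (α a) =
      μ (α a) (μ b b) + μ (α b) (μ a b) + μ (α b) (μ b a) := by
  have hadd := hcomm (a + b)
  have hsub := hcomm (a - b)
  simp only [map_add, map_sub, LinearMap.add_apply, LinearMap.sub_apply] at hadd hsub
  refine smul_right_injective V (two_ne_zero : (2 : K) ≠ 0) ?_
  linear_combination (norm := module) hadd + hsub - (2 : K) • hcomm a

/-- Linearizing at `a = x²`, `b = α(x)`: multiplicativity gives `bb = α(a)` and the
hypothesis gives `ab = ba`, so all terms but `2 (ab)α(b) = 2 α(b)(ab)` cancel. -/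
lemma homPow_three_mul_comm [NeZero (2 : K)] (hmul : IsMultiplicative μ α)
    (hcomm : ∀ x : V, μ (μ x x) (α x) = μ (α x) (μ x x)) (x : V) :
    μ (homPow μ α x 3) (α (α x)) = μ (α (α x)) (homPow μ α x 3) := by
  have h := sq_mul_comm_linearize μ α hcomm (μ x x) (α x)
  rw [← hmul x x, hcomm x] at h
  rw [homPow_three, hcomm x]
  refine smul_right_injective V (two_ne_zero : (2 : K) ≠ 0) ?_
  linear_combination (norm := module) h

lemma isNthHomPowerAssoc_two : IsNthHomPowerAssoc μ α 2 := by
  intro x i hi₁ hi₂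
  obtain rfl : i = 1 := by omega
  rfl

lemma isUpToNthHomPowerAssoc_four_iff :
    IsUpToNthHomPowerAssoc μ α 4 ↔ IsNthHomPowerAssoc μ α 3 ∧ IsNthHomPowerAssoc μ α 4 := by
  refine ⟨fun h => ⟨h 3 (by norm_num) (by norm_num), h 4 (by norm_num) le_rfl⟩, ?_⟩
  rintro ⟨h₃, h₄⟩ m hm₂ hm₄
  interval_cases m
  exacts [isNthHomPowerAssoc_two μ α, h₃, h₄]

lemma isNthHomPowerAssoc_three_iff :
    IsNthHomPowerAssoc μ α 3 ↔ ∀ x : V, homAssoc μ α x x x = 0 := by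
  simp only [homAssoc_self_eq_zero_iff]
  refine ⟨fun h x => h x 1 le_rfl (by norm_num), fun h x i hi₁ hi₂ => ?_⟩
  interval_cases i
  · exact h x
  · rfl

lemma isNthHomPowerAssoc_four_iff [NeZero (2 : K)] (hmul : IsMultiplicative μ α)
    (h₃ : IsNthHomPowerAssoc μ α 3) :
    IsNthHomPowerAssoc μ α 4 ↔ ∀ x : V, homAssoc μ α (μ x x) (α x) (α x) = 0 := by
  simp only [homAssoc_sq_eq_zero_iff μ α hmul]
  refine ⟨fun h x => h x 2 (by norm_num) (by norm_num), fun h x i hi₁ hi₂ => ?_⟩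
  have hcomm x := ((isNthHomPowerAssoc_three_iff μ α).1 h₃ x)
  simp only [homAssoc_self_eq_zero_iff] at hcomm
  interval_cases i
  · exact homPow_three_mul_comm μ α hmul hcomm x
  · exact h x
  · rfl

end HomPower

/-- Corollary: for a multiplicative Hom-algebra the following are equivalent:
(1) `x²α(x) = α(x)x²` and `x⁴ = α(x²)α(x²)`;
(2) `as(x,x,x) = 0` and `as(x²,α(x),α(x)) = 0`;
(3) `A` is up to fourth Hom-power associative. -/
theorem stmt12 (μ : A →ₗ[k] A →ₗ[k] A) (α : A →ₗ[k] A)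
    (hmul : IsMultiplicative μ α) :
    ((∀ x : A, μ (μ x x) (α x) = μ (α x) (μ x x) ∧
        homPow μ α x 4 = μ (α (μ x x)) (α (μ x x))) ↔
      (∀ x : A, homAssoc μ α x x x = 0 ∧ homAssoc μ α (μ x x) (α x) (α x) = 0)) ∧
    ((∀ x : A, homAssoc μ α x x x = 0 ∧ homAssoc μ α (μ x x) (α x) (α x) = 0) ↔
      IsUpToNthHomPowerAssoc μ α 4) := by
  constructor
  · exact forall_congr' fun x => and_congr (homAssoc_self_eq_zero_iff μ α x).symm
      (homAssoc_sq_eq_zero_iff μ α hmul x).symm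
  · rw [isUpToNthHomPowerAssoc_four_iff, forall_and, ← isNthHomPowerAssoc_three_iff]
    exact and_congr_right fun h₃ => (isNthHomPowerAssoc_four_iff μ α hmul h₃).symm
end

section
/- Let (A, μ, α) be a multiplicative Hom-algebra over a field k of characteristic 0 that is either a right Hom-alternative algebra or a non-commutative Hom-Jordan algebra. Then A is up to fourth Hom-power associative. -/
variable {k A : Type*} [Field k] [CharZero k] [AddCommGroup A] [Module k A]

/-- `A` is right Hom-alternative: `as(y,x,x) = 0`. -/
def IsRightHomAlternative (μ : A →ₗ[k] A →ₗ[k] A) (α : A →ₗ[k] A) : Prop :=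
  ∀ x y : A, homAssoc μ α y x x = 0

/-- `A` is a non-commutative Hom-Jordan algebra: it is Hom-flexible and satisfies
`as(x²,α(y),α(x)) = 0`. -/
def IsNoncommHomJordan (μ : A →ₗ[k] A →ₗ[k] A) (α : A →ₗ[k] A) : Prop :=
  (∀ x y : A, homAssoc μ α x y x = 0) ∧
  (∀ x y : A, homAssoc μ α (μ x x) (α y) (α x) = 0)

/-!
Up to degree four, Hom-power associativity follows from three identities for all `x`:
`as(x, x, x) = 0`, `as(x², αx, αx) = 0` and `as(αx, αx, x²) = 0` (multiplicativity turns
`αx · αx` into `α(x²)`). In both cases the first two are instances of the defining identities.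
The third comes from linearizing one of them: flexibility gives
`as(αx, αx, x²) = -as(x², αx, αx) = 0`, while right Hom-alternativity gives
`as(αx, x², αx) + as(αx, αx, x²) = 0`, whose two terms agree by the first two identities, so
the third one follows after dividing by `2`.
-/

section HomAssoc

variable {K V : Type*} [Field K] [AddCommGroup V] [Module K V]
  {μ : V →ₗ[K] V →ₗ[K] V} {α : V →ₗ[K] V}

lemma homAssoc_eq_zero_iff {x y z : V} :
    homAssoc μ α x y z = 0 ↔ μ (μ x y) (α z) = μ (α x) (μ y z) :=
  sub_eq_zero

lemma homAssoc_add_left (a b y z : V) :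
    homAssoc μ α (a + b) y z = homAssoc μ α a y z + homAssoc μ α b y z := by
  simp only [homAssoc, map_add, LinearMap.add_apply]
  abel

lemma homAssoc_add_middle (x a b z : V) :
    homAssoc μ α x (a + b) z = homAssoc μ α x a z + homAssoc μ α x b z := by
  simp only [homAssoc, map_add, LinearMap.add_apply]
  abel

lemma homAssoc_add_right (x y a b : V) :
    homAssoc μ α x y (a + b) = homAssoc μ α x y a + homAssoc μ α x y b := by
  simp only [homAssoc, map_add]
  abel

lemma IsRightHomAlternative.homAssoc_add_homAssoc_swap (hra : IsRightHomAlternative μ α)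
    (y a b : V) : homAssoc μ α y a b + homAssoc μ α y b a = 0 := by
  have h := hra (a + b) y
  rwa [homAssoc_add_middle, homAssoc_add_right, homAssoc_add_right, hra, hra, zero_add,
    add_zero] at h

lemma IsNoncommHomJordan.homAssoc_add_homAssoc_swap (hj : IsNoncommHomJordan μ α)
    (a y b : V) : homAssoc μ α a y b + homAssoc μ α b y a = 0 := by
  have h := hj.1 (a + b) y
  rwa [homAssoc_add_left, homAssoc_add_right, homAssoc_add_right, hj.1, hj.1, zero_add,
    add_zero] at h

lemma IsNoncommHomJordan.homAssoc_map_map_sq (hj : IsNoncommHomJordan μ α) (x : V) :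
    homAssoc μ α (α x) (α x) (μ x x) = 0 := by
  simpa only [hj.2 x x, add_zero] using hj.homAssoc_add_homAssoc_swap (α x) (α x) (μ x x)

lemma IsRightHomAlternative.homAssoc_map_map_sq [CharZero K] (hra : IsRightHomAlternative μ α)
    (hmul : IsMultiplicative μ α) (x : V) :
    homAssoc μ α (α x) (α x) (μ x x) = 0 := by
  have hcube := homAssoc_eq_zero_iff.1 (hra x x)
  have hsq := homAssoc_eq_zero_iff.1 (hra (α x) (μ x x))
  have hswap : homAssoc μ α (α x) (μ x x) (α x) = homAssoc μ α (α x) (α x) (μ x x) := by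
    rw [homAssoc, homAssoc, ← hcube, hsq, ← hmul]
  have htwice : (2 : K) • homAssoc μ α (α x) (α x) (μ x x) = 0 := by
    simpa only [two_smul, hswap] using hra.homAssoc_add_homAssoc_swap (α x) (μ x x) (α x)
  exact (smul_eq_zero.1 htwice).resolve_left two_ne_zero

end HomAssoc

section HomPower

variable {K V : Type*} [Field K] [AddCommGroup V] [Module K V]
  (μ : V →ₗ[K] V →ₗ[K] V) (α : V →ₗ[K] V)

lemma isNthHomPowerAssoc_three_of (hcube : ∀ x, homAssoc μ α x x x = 0) :
    IsNthHomPowerAssoc μ α 3 := by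
  intro x i hi1 hi2
  interval_cases i
  · exact homAssoc_eq_zero_iff.1 (hcube x)
  · rfl

lemma isNthHomPowerAssoc_four_of (hmul : IsMultiplicative μ α)
    (hcube : ∀ x, homAssoc μ α x x x = 0)
    (hsq_right : ∀ x, homAssoc μ α (μ x x) (α x) (α x) = 0)
    (hsq_left : ∀ x, homAssoc μ α (α x) (α x) (μ x x) = 0) :
    IsNthHomPowerAssoc μ α 4 := by
  intro x i hi1 hi2
  have hx4 : μ (μ (μ x x) (α x)) (α (α x)) = μ (α (μ x x)) (α (μ x x)) := by
    have h := homAssoc_eq_zero_iff.1 (hsq_right x)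
    rwa [← hmul x x] at h
  have hx4_comm : μ (μ (μ x x) (α x)) (α (α x)) = μ (α (α x)) (μ (μ x x) (α x)) := by
    have h := homAssoc_eq_zero_iff.1 (hsq_left x)
    rwa [← hmul x x, ← hx4, ← homAssoc_eq_zero_iff.1 (hcube x)] at h
  interval_cases i
  · simpa [homPow, pow_succ] using hx4_comm
  · simpa [homPow, pow_succ] using hx4
  · rfl

lemma isUpToNthHomPowerAssoc_four_of (hmul : IsMultiplicative μ α)
    (hcube : ∀ x, homAssoc μ α x x x = 0)
    (hsq_right : ∀ x, homAssoc μ α (μ x x) (α x) (α x) = 0)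
    (hsq_left : ∀ x, homAssoc μ α (α x) (α x) (μ x x) = 0) :
    IsUpToNthHomPowerAssoc μ α 4 := by
  intro m hm2 hm4
  interval_cases m
  · exact isNthHomPowerAssoc_two μ α
  · exact isNthHomPowerAssoc_three_of μ α hcube
  · exact isNthHomPowerAssoc_four_of μ α hmul hcube hsq_right hsq_left

end HomPower

/-- Proposition: a multiplicative right Hom-alternative algebra or non-commutative
Hom-Jordan algebra is up to fourth Hom-power associative. -/
theorem stmt13 (μ : A →ₗ[k] A →ₗ[k] A) (α : A →ₗ[k] A)
    (hmul : IsMultiplicative μ α)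
    (h : IsRightHomAlternative μ α ∨ IsNoncommHomJordan μ α) :
    IsUpToNthHomPowerAssoc μ α 4 := by
  rcases h with hra | hj
  · exact isUpToNthHomPowerAssoc_four_of μ α hmul (fun x => hra x x)
      (fun x => hra (α x) (μ x x)) (hra.homAssoc_map_map_sq hmul)
  · exact isUpToNthHomPowerAssoc_four_of μ α hmul (fun x => hj.1 x x) (fun x => hj.2 x x)
      hj.homAssoc_map_map_sq
end

section
/- Let (A, μ, α) be a Hom-algebra over a field k of characteristic 0. Then A satisfies x⁴ = α(x²)α(x²) for all x ∈ A (where x² = xx, x³ = x²α(x), x⁴ = x³α²(x)) if and only if F(x,y,z,w) = 0 for all x, y, z, w ∈ A, where F = F_L − F_R, F_L(x,y,z,w) is the sum of ((a∙b)α(c))α²(d) over the twelve distinct permutations (a,b,c,d) of (x,y,z,w) (i.e., over the set {(1 2 3)^i (1 2 3 4)^j : 0 ≤ i ≤ 2, 0 ≤ j ≤ 3} ⊂ S₄ acting on (x,y,z,w)), F_R(x,y,z,w) is the sum of α(a∙b)α(c∙d) over the six permutations {Id, (1 3), (2 3), (1 4), (2 4), (1 3)(2 4)} ⊂ S₄ acting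 on (x,y,z,w), and a∙b = ab + ba. -/
variable {k A : Type*} [Field k] [CharZero k] [AddCommGroup A] [Module k A]

/-- `x ∙ y = xy + yx`. -/
def homBullet (μ : A →ₗ[k] A →ₗ[k] A) (x y : A) : A :=
  μ x y + μ y x

/-- `F_L(x,y,z,w)`: the sum of `((a∙b)α(c))α²(d)` over the twelve distinct
permutations `(a,b,c,d)` of `(x,y,z,w)`. -/
def FL (μ : A →ₗ[k] A →ₗ[k] A) (α : A →ₗ[k] A) (x y z w : A) : A :=
  μ (μ (homBullet μ x y) (α z)) ((α ^ 2) w) + μ (μ (homBullet μ x y) (α w)) ((α ^ 2) z) +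
    μ (μ (homBullet μ x z) (α y)) ((α ^ 2) w) + μ (μ (homBullet μ x z) (α w)) ((α ^ 2) y) +
    μ (μ (homBullet μ x w) (α y)) ((α ^ 2) z) + μ (μ (homBullet μ x w) (α z)) ((α ^ 2) y) +
    μ (μ (homBullet μ y z) (α x)) ((α ^ 2) w) + μ (μ (homBullet μ y z) (α w)) ((α ^ 2) x) +
    μ (μ (homBullet μ y w) (α x)) ((α ^ 2) z) + μ (μ (homBullet μ y w) (α z)) ((α ^ 2) x) +
    μ (μ (homBullet μ z w) (α x)) ((α ^ 2) y) + μ (μ (homBullet μ z w) (α y)) ((α ^ 2) x)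

/-- `F_R(x,y,z,w)`: the sum of `α(a∙b)α(c∙d)` over the six permutations
`{Id, (1 3), (2 3), (1 4), (2 4), (1 3)(2 4)}` of `(x,y,z,w)`. -/
def FR (μ : A →ₗ[k] A →ₗ[k] A) (α : A →ₗ[k] A) (x y z w : A) : A :=
  μ (α (homBullet μ x y)) (α (homBullet μ z w)) +
    μ (α (homBullet μ z y)) (α (homBullet μ x w)) +
    μ (α (homBullet μ x z)) (α (homBullet μ y w)) +
    μ (α (homBullet μ w y)) (α (homBullet μ z x)) +
    μ (α (homBullet μ x w)) (α (homBullet μ z y)) +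
    μ (α (homBullet μ z w)) (α (homBullet μ x y))

set_option linter.unusedSectionVars false

/-- Auxiliary: the quartic expression whose vanishing is the fourth Hom-power identity. -/
def Qd (μ : A →ₗ[k] A →ₗ[k] A) (α : A →ₗ[k] A) (v : A) : A :=
  μ (μ (μ v v) (α v)) ((α ^ 2) v) - μ (α (μ v v)) (α (μ v v))

set_option maxHeartbeats 4000000 in
theorem keylem (μ : A →ₗ[k] A →ₗ[k] A) (α : A →ₗ[k] A) (x y z w : A) :
    FL μ α x y z w - FR μ α x y z w =
      Qd μ α (x+y+z+w)
      - (Qd μ α (x+y+z) + Qd μ α (x+y+w) + Qd μ α (x+z+w) + Qd μ α (y+z+w))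
      + (Qd μ α (x+y) + Qd μ α (x+z) + Qd μ α (x+w) + Qd μ α (y+z) + Qd μ α (y+w) + Qd μ α (z+w))
      - (Qd μ α x + Qd μ α y + Qd μ α z + Qd μ α w) := by
  simp only [FL, FR, Qd, homBullet, map_add, LinearMap.add_apply]
  abel

theorem diaglem (μ : A →ₗ[k] A →ₗ[k] A) (α : A →ₗ[k] A) (x : A) :
    FL μ α x x x x - FR μ α x x x x = (24 : k) • Qd μ α x := by
  simp only [FL, FR, Qd, homBullet, map_add, LinearMap.add_apply]
  module

theorem homPow4 (μ : A →ₗ[k] A →ₗ[k] A) (α : A →ₗ[k] A) (x : A) :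
    homPow μ α x 4 = μ (μ (μ x x) (α x)) ((α ^ 2) x) := by
  simp [homPow, pow_one, pow_zero]

/-- Theorem: a Hom-algebra satisfies `x⁴ = α(x²)α(x²)` for all `x` iff the
linearized identity `F(x,y,z,w) = F_L(x,y,z,w) − F_R(x,y,z,w) = 0` holds for all
`x, y, z, w`. -/

theorem stmt14 (μ : A →ₗ[k] A →ₗ[k] A) (α : A →ₗ[k] A) :
    (∀ x : A, homPow μ α x 4 = μ (α (μ x x)) (α (μ x x))) ↔
      (∀ x y z w : A, FL μ α x y z w - FR μ α x y z w = 0) := by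
  constructor
  · intro h x y z w
    have hQ : ∀ v : A, Qd μ α v = 0 := by
      intro v
      rw [Qd, ← homPow4, h v, sub_self]
    rw [keylem]
    simp [hQ]
  · intro h x
    have h24 : (24 : k) • Qd μ α x = 0 := by rw [← diaglem, h]
    have hQ : Qd μ α x = 0 := (smul_eq_zero.mp h24).resolve_left (by norm_num)
    rw [Qd, sub_eq_zero] at hQ
    rw [homPow4, hQ]
end

section
/- An algebra (A, μ) over a field k of characteristic 0 (a k-vector space with bilinear multiplication) is power associative if and only if it satisfies x²x = xx² and (x²x)x = x²x² for all x ∈ A. -/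
variable {k A : Type*} [Field k] [CharZero k] [AddCommGroup A] [Module k A]

lemma vandermonde {m : ℕ} (c : ℕ → A) (h : ∀ t : k, ∑ i ∈ Finset.range m, t ^ i • c i = 0)
    {i : ℕ} (him : i < m) : c i = 0 := by
  rw [← Module.forall_dual_apply_eq_zero_iff k]
  intro φ
  have hp : (∑ j ∈ Finset.range m, Polynomial.C (φ (c j)) * Polynomial.X ^ j : Polynomial k) = 0 := by
    apply Polynomial.funext
    intro t
    simp only [Polynomial.eval_finset_sum, Polynomial.eval_mul, Polynomial.eval_C,
      Polynomial.eval_pow, Polynomial.eval_X, Polynomial.eval_zero]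
    have := congrArg φ (h t)
    simpa [map_sum, map_smul, smul_eq_mul, mul_comm] using this
  have := congrArg (fun p => Polynomial.coeff p i) hp
  simpa [Polynomial.finset_sum_coeff, Polynomial.coeff_C_mul, Polynomial.coeff_X_pow,
    Finset.sum_ite_eq', him] using this


section
variable (μ : A →ₗ[k] A →ₗ[k] A)

lemma Lid (hg : ∀ z : A, μ (μ z z) z = μ z (μ z z)) (u v : A) :
    μ (μ u v) u + μ (μ v u) u + μ (μ u u) v = μ v (μ u u) + μ u (μ u v) + μ u (μ v u) := by
  have key : ∀ t : k, ∑ i ∈ Finset.range 4, t ^ i •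
      (fun i => match i with
        | 0 => μ (μ u u) u - μ u (μ u u)
        | 1 => μ (μ u v) u + μ (μ v u) u + μ (μ u u) v
              - (μ v (μ u u) + μ u (μ u v) + μ u (μ v u))
        | 2 => μ (μ u v) v + μ (μ v u) v + μ (μ v v) u
              - (μ u (μ v v) + μ v (μ u v) + μ v (μ v u))
        | _ => μ (μ v v) v - μ v (μ v v)) i = 0 := by
    intro t
    have h := hg (u + t • v)
    rw [← sub_eq_zero] at h
    rw [← h]
    simp only [Finset.sum_range_succ, Finset.sum_range_zero, map_add, map_smul,
      LinearMap.add_apply, LinearMap.smul_apply]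
    module
  have h1 := vandermonde _ key (by norm_num : (1:ℕ) < 4)
  simpa [sub_eq_zero] using h1

lemma Gid (hg : ∀ z : A, μ (μ z z) z = μ z (μ z z)) (u v w : A) :
    μ (μ u w) v + μ (μ w u) v + μ (μ u v) w + μ (μ w v) u + μ (μ v u) w + μ (μ v w) u
    = μ u (μ w v) + μ w (μ u v) + μ u (μ v w) + μ w (μ v u) + μ v (μ u w) + μ v (μ w u) := by
  have key : ∀ t : k, ∑ i ∈ Finset.range 3, t ^ i •
      (fun i => match i with
        | 0 => μ (μ u u) v + μ (μ u v) u + μ (μ v u) u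
              - (μ u (μ u v) + μ u (μ v u) + μ v (μ u u))
        | 1 => μ (μ u w) v + μ (μ w u) v + μ (μ u v) w + μ (μ w v) u + μ (μ v u) w + μ (μ v w) u
              - (μ u (μ w v) + μ w (μ u v) + μ u (μ v w) + μ w (μ v u) + μ v (μ u w) + μ v (μ w u))
        | _ => μ (μ w w) v + μ (μ w v) w + μ (μ v w) w
              - (μ w (μ w v) + μ w (μ v w) + μ v (μ w w))) i = 0 := by
    intro t
    have h := Lid μ hg (u + t • w) v
    rw [← sub_eq_zero] at h
    rw [← h]
    simp only [Finset.sum_range_succ, Finset.sum_range_zero, map_add, map_smul,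
      LinearMap.add_apply, LinearMap.smul_apply]
    module
  have h1 := vandermonde _ key (by norm_num : (1:ℕ) < 3)
  simpa [sub_eq_zero] using h1

set_option maxHeartbeats 3200000 in
lemma F1id (hf : ∀ z : A, μ (μ (μ z z) z) z = μ (μ z z) (μ z z)) (u v : A) :
    μ (μ (μ u u) u) v + μ (μ (μ u u) v) u + μ (μ (μ u v) u) u + μ (μ (μ v u) u) u
    = μ (μ u u) (μ u v) + μ (μ u u) (μ v u) + μ (μ u v) (μ u u) + μ (μ v u) (μ u u) := by
  have key : ∀ t : k, ∑ i ∈ Finset.range 5, t ^ i •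
      (fun i => match i with
        | 0 => μ (μ (μ u u) u) u - μ (μ u u) (μ u u)
        | 1 => μ (μ (μ u u) u) v + μ (μ (μ u u) v) u + μ (μ (μ u v) u) u + μ (μ (μ v u) u) u
              - (μ (μ u u) (μ u v) + μ (μ u u) (μ v u) + μ (μ u v) (μ u u) + μ (μ v u) (μ u u))
        | 2 => μ (μ (μ u u) v) v + μ (μ (μ u v) u) v + μ (μ (μ u v) v) u + μ (μ (μ v u) u) v
                + μ (μ (μ v u) v) u + μ (μ (μ v v) u) u
              - (μ (μ u u) (μ v v) + μ (μ u v) (μ u v) + μ (μ u v) (μ v u) + μ (μ v u) (μ u v)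
                + μ (μ v u) (μ v u) + μ (μ v v) (μ u u))
        | 3 => μ (μ (μ u v) v) v + μ (μ (μ v u) v) v + μ (μ (μ v v) u) v + μ (μ (μ v v) v) u
              - (μ (μ u v) (μ v v) + μ (μ v u) (μ v v) + μ (μ v v) (μ u v) + μ (μ v v) (μ v u))
        | _ => μ (μ (μ v v) v) v - μ (μ v v) (μ v v)) i = 0 := by
    intro t
    have h := hf (u + t • v)
    rw [← sub_eq_zero] at h
    rw [← h]
    simp only [Finset.sum_range_succ, Finset.sum_range_zero, map_add, map_smul,
      LinearMap.add_apply, LinearMap.smul_apply]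
    module
  have h1 := vandermonde _ key (by norm_num : (1:ℕ) < 5)
  simpa [sub_eq_zero] using h1

set_option maxHeartbeats 3200000 in
lemma F2id (hf : ∀ z : A, μ (μ (μ z z) z) z = μ (μ z z) (μ z z)) (u v w : A) :
    μ (μ (μ u u) w) v + μ (μ (μ u w) u) v + μ (μ (μ w u) u) v + μ (μ (μ u u) v) w
    + μ (μ (μ u w) v) u + μ (μ (μ w u) v) u + μ (μ (μ u v) u) w + μ (μ (μ u v) w) u
    + μ (μ (μ w v) u) u + μ (μ (μ v u) u) w + μ (μ (μ v u) w) u + μ (μ (μ v w) u) u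
    = μ (μ u u) (μ w v) + μ (μ u w) (μ u v) + μ (μ w u) (μ u v) + μ (μ u u) (μ v w)
    + μ (μ u w) (μ v u) + μ (μ w u) (μ v u) + μ (μ u v) (μ u w) + μ (μ u v) (μ w u)
    + μ (μ w v) (μ u u) + μ (μ v u) (μ u w) + μ (μ v u) (μ w u) + μ (μ v w) (μ u u) := by
  have key : ∀ t : k, ∑ i ∈ Finset.range 4, t ^ i •
      (fun i => match i with
        | 0 => μ (μ (μ u u) u) v + μ (μ (μ u u) v) u + μ (μ (μ u v) u) u + μ (μ (μ v u) u) u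
              - (μ (μ u u) (μ u v) + μ (μ u u) (μ v u) + μ (μ u v) (μ u u) + μ (μ v u) (μ u u))
        | 1 => μ (μ (μ u u) w) v + μ (μ (μ u w) u) v + μ (μ (μ w u) u) v + μ (μ (μ u u) v) w
                + μ (μ (μ u w) v) u + μ (μ (μ w u) v) u + μ (μ (μ u v) u) w + μ (μ (μ u v) w) u
                + μ (μ (μ w v) u) u + μ (μ (μ v u) u) w + μ (μ (μ v u) w) u + μ (μ (μ v w) u) u
              - (μ (μ u u) (μ w v) + μ (μ u w) (μ u v) + μ (μ w u) (μ u v) + μ (μ u u) (μ v w)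
                + μ (μ u w) (μ v u) + μ (μ w u) (μ v u) + μ (μ u v) (μ u w) + μ (μ u v) (μ w u)
                + μ (μ w v) (μ u u) + μ (μ v u) (μ u w) + μ (μ v u) (μ w u) + μ (μ v w) (μ u u))
        | 2 => μ (μ (μ u w) w) v + μ (μ (μ w u) w) v + μ (μ (μ w w) u) v + μ (μ (μ u w) v) w
                + μ (μ (μ w u) v) w + μ (μ (μ w w) v) u + μ (μ (μ u v) w) w + μ (μ (μ w v) u) w
                + μ (μ (μ w v) w) u + μ (μ (μ v u) w) w + μ (μ (μ v w) u) w + μ (μ (μ v w) w) u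
              - (μ (μ u w) (μ w v) + μ (μ w u) (μ w v) + μ (μ w w) (μ u v) + μ (μ u w) (μ v w)
                + μ (μ w u) (μ v w) + μ (μ w w) (μ v u) + μ (μ u v) (μ w w) + μ (μ w v) (μ u w)
                + μ (μ w v) (μ w u) + μ (μ v u) (μ w w) + μ (μ v w) (μ u w) + μ (μ v w) (μ w u))
        | _ => μ (μ (μ w w) w) v + μ (μ (μ w w) v) w + μ (μ (μ w v) w) w + μ (μ (μ v w) w) w
              - (μ (μ w w) (μ w v) + μ (μ w w) (μ v w) + μ (μ w v) (μ w w) + μ (μ v w) (μ w w))) i = 0 := by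
    intro t
    have h := F1id μ hf (u + t • w) v
    rw [← sub_eq_zero] at h
    rw [← h]
    simp only [Finset.sum_range_succ, Finset.sum_range_zero, map_add, map_smul,
      LinearMap.add_apply, LinearMap.smul_apply]
    module
  have h1 := vandermonde _ key (by norm_num : (1:ℕ) < 4)
  simpa [sub_eq_zero] using h1

lemma GRel (hg : ∀ z : A, μ (μ z z) z = μ z (μ z z)) (x : A) (N : ℕ)
    (IH : ∀ i j, 1 ≤ i → 1 ≤ j → i + j < N →
      μ (rightPow μ x i) (rightPow μ x j) = rightPow μ x (i + j))
    (a b c : ℕ) (ha : 1 ≤ a) (hb : 1 ≤ b) (hc : 1 ≤ c) (habc : a + b + c = N) :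
    μ (rightPow μ x (a+b)) (rightPow μ x c) + μ (rightPow μ x (a+c)) (rightPow μ x b)
      + μ (rightPow μ x (b+c)) (rightPow μ x a)
    = μ (rightPow μ x a) (rightPow μ x (b+c)) + μ (rightPow μ x b) (rightPow μ x (a+c))
      + μ (rightPow μ x c) (rightPow μ x (a+b)) := by
  have g := Gid μ hg (rightPow μ x a) (rightPow μ x b) (rightPow μ x c)
  rw [IH a c ha hc (by omega), IH c a hc ha (by omega), IH a b ha hb (by omega),
      IH c b hc hb (by omega), IH b a hb ha (by omega), IH b c hb hc (by omega)] at g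
  rw [Nat.add_comm c a, Nat.add_comm c b, Nat.add_comm b a] at g
  have h2 : (2:k) • (μ (rightPow μ x (a+b)) (rightPow μ x c) + μ (rightPow μ x (a+c)) (rightPow μ x b)
      + μ (rightPow μ x (b+c)) (rightPow μ x a))
    = (2:k) • (μ (rightPow μ x a) (rightPow μ x (b+c)) + μ (rightPow μ x b) (rightPow μ x (a+c))
      + μ (rightPow μ x c) (rightPow μ x (a+b))) := by
    linear_combination (norm := module) g
  exact smul_right_injective A (by norm_num : (2:k) ≠ 0) h2

lemma FRel (hf : ∀ z : A, μ (μ (μ z z) z) z = μ (μ z z) (μ z z)) (x : A) (N : ℕ)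
    (IH : ∀ i j, 1 ≤ i → 1 ≤ j → i + j < N →
      μ (rightPow μ x i) (rightPow μ x j) = rightPow μ x (i + j))
    (b c : ℕ) (hb : 1 ≤ b) (hc : 1 ≤ c) (hbc : b + c + 2 = N) :
    (6:k) • μ (rightPow μ x (b+c+1)) x + (3:k) • μ (rightPow μ x (b+2)) (rightPow μ x c)
      + (3:k) • μ (rightPow μ x (c+2)) (rightPow μ x b)
    = (2:k) • μ (rightPow μ x (b+c)) (rightPow μ x 2)
      + (2:k) • μ (rightPow μ x 2) (rightPow μ x (b+c))
      + (4:k) • μ (rightPow μ x (b+1)) (rightPow μ x (c+1))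
      + (4:k) • μ (rightPow μ x (c+1)) (rightPow μ x (b+1)) := by
  have hxx : μ x x = rightPow μ x 2 := rfl
  have hPx : ∀ i, 1 ≤ i → i + 1 < N → μ (rightPow μ x i) x = rightPow μ x (i+1) := by
    intro i hi h; exact IH i 1 hi le_rfl h
  have hxP : ∀ j, 1 ≤ j → j + 1 < N → μ x (rightPow μ x j) = rightPow μ x (j+1) := by
    intro j hj h
    have := IH 1 j le_rfl hj (by omega)
    rwa [Nat.add_comm 1 j] at this
  have g := F2id μ hf x (rightPow μ x b) (rightPow μ x c)
  simp only [hxx] at g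
  simp (disch := omega) only [IH, hPx, hxP] at g
  rw [show c+b = b+c from by omega] at g
  rw [show b+1+c = b+c+1 from by omega, show c+1+b = b+c+1 from by omega,
      show b+1+1 = b+2 from by omega, show c+1+1 = c+2 from by omega,
      show 2+b = b+2 from by omega, show 2+c = c+2 from by omega] at g
  linear_combination (norm := module) g
def albq : ℕ → ℚ
  | 0 => 0
  | 1 => 0
  | 2 => 1
  | (b+3) => (4 + 8 * albq (b+2) - 3 * albq (b+1)) / 3

lemma albq_rec3 (b : ℕ) (hb : 1 ≤ b) :
    (3:ℚ) * albq (b+2) = 4 + 8 * albq (b+1) - 3 * albq b := by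
  obtain ⟨l, rfl⟩ : ∃ l, b = l + 1 := ⟨b - 1, by omega⟩
  show (3:ℚ) * ((4 + 8 * albq (l+2) - 3 * albq (l+1)) / 3) = _
  ring

lemma albq_mono : ∀ b, 1 ≤ b → 0 ≤ albq b ∧ albq b ≤ albq (b+1) ∧ 1 ≤ albq (b+1) := by
  intro b
  induction b with
  | zero => omega
  | succ n IH =>
    intro _
    rcases Nat.eq_or_lt_of_le (Nat.one_le_iff_ne_zero.mpr (Nat.succ_ne_zero n)) with h | h
    · have h0 : n = 0 := by omega
      subst h0
      refine ⟨le_refl 0, ?_, ?_⟩ <;> norm_num [albq]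
    · have hn : 1 ≤ n := by omega
      obtain ⟨h1, h2, h3⟩ := IH hn
      have hr := albq_rec3 n hn
      refine ⟨by linarith, by nlinarith, by nlinarith⟩

lemma albq_pos (a : ℕ) (ha : 2 ≤ a) : 1 ≤ albq a := by
  obtain ⟨b, rfl⟩ : ∃ b, a = b + 1 := ⟨a - 1, by omega⟩
  exact (albq_mono b (by omega)).2.2
lemma step (hg : ∀ z : A, μ (μ z z) z = μ z (μ z z))
    (hf : ∀ z : A, μ (μ (μ z z) z) z = μ (μ z z) (μ z z)) (x : A) (N : ℕ) (hN : 5 ≤ N)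
    (IH : ∀ i j, 1 ≤ i → 1 ≤ j → i + j < N →
      μ (rightPow μ x i) (rightPow μ x j) = rightPow μ x (i + j)) :
    ∀ i j, 1 ≤ i → 1 ≤ j → i + j = N → μ (rightPow μ x i) (rightPow μ x j) = rightPow μ x N := by
  set D : ℕ → A := fun i => μ (rightPow μ x i) (rightPow μ x (N - i)) - rightPow μ x N with hD
  have hPsucc : ∀ m, 1 ≤ m → rightPow μ x (m+1) = μ (rightPow μ x m) x := by
    intro m hm
    obtain ⟨l, rfl⟩ : ∃ l, m = l + 1 := ⟨m - 1, by omega⟩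
    rfl
  have hDT : ∀ i j, i + j = N → 1 ≤ j → μ (rightPow μ x i) (rightPow μ x j) = D i + rightPow μ x N := by
    intro i j hij hj
    rw [hD]
    simp only
    rw [show N - i = j from by omega]
    abel
  have hD1 : ∀ i, i + 1 = N → D i = 0 := by
    intro i hi
    have h1 : μ (rightPow μ x i) (rightPow μ x 1) = D i + rightPow μ x N := hDT i 1 (by omega) le_rfl
    have h2 : μ (rightPow μ x i) (rightPow μ x 1) = rightPow μ x N := by
      rw [← hi, hPsucc i (by omega)]
      rfl
    rw [h2] at h1
    linear_combination (norm := module) -h1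
  have hGR : ∀ a b c, 1 ≤ a → 1 ≤ b → 1 ≤ c → a + b + c = N →
      D (a+b) + D (a+c) + D (b+c) = D a + D b + D c := by
    intro a b c ha hb hc h
    have g := GRel μ hg x N IH a b c ha hb hc h
    rw [hDT (a+b) c (by omega) hc, hDT (a+c) b (by omega) hb, hDT (b+c) a (by omega) ha,
        hDT a (b+c) (by omega) (by omega), hDT b (a+c) (by omega) (by omega),
        hDT c (a+b) (by omega) (by omega)] at g
    linear_combination (norm := module) g
  -- symmetry
  have hsym0 : ∀ a, 1 ≤ a → a + 1 ≤ N → D a = D (N - a) + a • D 1 := by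
    intro a
    induction a with
    | zero => omega
    | succ n IHa =>
      intro _ hn1
      rcases Nat.lt_or_ge n 1 with h | h
      · have h0 : n = 0 := by omega
        subst h0
        rw [hD1 (N-1) (by omega)]
        simp
      · have hrec := hGR n (N - 1 - n) 1 h (by omega) le_rfl (by omega)
        rw [show n + (N - 1 - n) = N - 1 from by omega, show N - 1 - n + 1 = N - n from by omega,
            hD1 (N-1) (by omega)] at hrec
        have hIH := IHa h (by omega)
        rw [show N - 1 - n = N - (n+1) from by omega] at hrec
        rw [succ_nsmul]
        linear_combination (norm := module) hrec + hIH
  have hD1z : D 1 = 0 := by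
    have h1 := hsym0 (N - 1) (by omega) (by omega)
    rw [hD1 (N-1) (by omega), show N - (N-1) = 1 from by omega] at h1
    have h2 : (N : k) • D 1 = 0 := by
      rw [Nat.cast_smul_eq_nsmul]
      have : (N - 1) • D 1 + D 1 = (N : ℕ) • D 1 := by
        rw [← succ_nsmul, show N - 1 + 1 = N from by omega]
      linear_combination (norm := module) this.symm - h1
    rcases smul_eq_zero.mp h2 with h | h
    · exact absurd h (by exact_mod_cast by omega)
    · exact h
  have hsym : ∀ a b, 1 ≤ a → 1 ≤ b → a + b = N → D a = D b := by
    intro a b ha hb hab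
    have h1 := hsym0 a ha (by omega)
    rw [hD1z, show N - a = b from by omega] at h1
    simpa using h1
  have hREC : ∀ b, 1 ≤ b → b + 3 ≤ N →
      (3:k) • D (b+2) + (3:k) • D b = (4:k) • D 2 + (8:k) • D (b+1) := by
    intro b hb h3
    have g := FRel μ hf x N IH b (N - b - 2) hb (by omega) (by omega)
    have e1 : μ (rightPow μ x (b + (N-b-2) + 1)) x = D (b + (N-b-2) + 1) + rightPow μ x N :=
      hDT (b + (N-b-2) + 1) 1 (by omega) le_rfl
    rw [e1, hDT (b+2) (N-b-2) (by omega) (by omega), hDT ((N-b-2)+2) b (by omega) hb,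
        hDT (b + (N-b-2)) 2 (by omega) (by omega), hDT 2 (b + (N-b-2)) (by omega) (by omega),
        hDT (b+1) ((N-b-2)+1) (by omega) (by omega), hDT ((N-b-2)+1) (b+1) (by omega) (by omega)]
      at g
    rw [hD1 (b + (N-b-2) + 1) (by omega),
        hsym ((N-b-2)+2) b (by omega) hb (by omega),
        hsym (b + (N-b-2)) 2 (by omega) (by omega) (by omega),
        hsym ((N-b-2)+1) (b+1) (by omega) (by omega) (by omega)] at g
    linear_combination (norm := module) g
  have hq : ∀ a, 1 ≤ a → a + 1 ≤ N → D a = ((albq a : ℚ) : k) • D 2 := by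
    intro a
    induction a using Nat.strong_induction_on with
    | _ a IHa =>
      intro ha haN
      match a, ha with
      | 1, _ => rw [hD1z]; norm_num [albq]
      | 2, _ => norm_num [albq]
      | (b+3), _ =>
        have hb1 : 1 ≤ b + 1 := by omega
        have hrec := hREC (b+1) hb1 (by omega)
        rw [IHa (b+1) (by omega) hb1 (by omega), IHa (b+2) (by omega) (by omega) (by omega)]
          at hrec
        have key : (3:k) • D (b+3) = ((3 * albq (b+3) : ℚ) : k) • D 2 := by
          rw [albq_rec3 (b+1) hb1]
          push_cast
          linear_combination (norm := module) hrec
        have key2 : (3:k) • D (b+3) = (3:k) • (((albq (b+3) : ℚ) : k) • D 2) := by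
          rw [key]
          push_cast
          rw [mul_smul]
        exact smul_right_injective A (by norm_num : (3:k) ≠ 0) key2
  have hD2 : D 2 = 0 := by
    have h1 := hq (N-1) (by omega) (by omega)
    rw [hD1 (N-1) (by omega)] at h1
    rcases smul_eq_zero.mp h1.symm with h | h
    · exfalso
      have := albq_pos (N-1) (by omega)
      rw [Rat.cast_eq_zero] at h
      rw [h] at this
      norm_num at this
    · exact h
  intro i j hi hj hij
  rw [hDT i j hij hj, hq i hi (by omega), hD2, smul_zero, zero_add]
lemma albert_pow_add (hg : ∀ z : A, μ (μ z z) z = μ z (μ z z))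
    (hf : ∀ z : A, μ (μ (μ z z) z) z = μ (μ z z) (μ z z)) (x : A) :
    ∀ N i j, 1 ≤ i → 1 ≤ j → i + j = N → μ (rightPow μ x i) (rightPow μ x j) = rightPow μ x N := by
  intro N
  induction N using Nat.strong_induction_on with
  | _ N IH =>
    intro i j hi hj hij
    have IH' : ∀ a b, 1 ≤ a → 1 ≤ b → a + b < N →
        μ (rightPow μ x a) (rightPow μ x b) = rightPow μ x (a + b) := by
      intro a b ha hb h
      exact IH (a+b) h a b ha hb rfl
    rcases Nat.lt_or_ge N 5 with h5 | h5
    · -- N ∈ {2,3,4}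
      have hN2 : 2 ≤ N := by omega
      interval_cases N
      · obtain ⟨rfl, rfl⟩ : i = 1 ∧ j = 1 := by omega
        rfl
      · rcases (show i = 2 ∧ j = 1 ∨ i = 1 ∧ j = 2 from by omega) with ⟨rfl, rfl⟩ | ⟨rfl, rfl⟩
        · rfl
        · exact (hg x).symm
      · rcases (show i = 3 ∧ j = 1 ∨ i = 2 ∧ j = 2 ∨ i = 1 ∧ j = 3 from by omega) with
          ⟨rfl, rfl⟩ | ⟨rfl, rfl⟩ | ⟨rfl, rfl⟩
        · rfl
        · exact (hf x).symm
        · have l := Lid μ hg x (μ x x)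
          rw [← hg x] at l
          have h2 : (2:k) • (μ x (μ (μ x x) x)) = (2:k) • (μ (μ (μ x x) x) x) := by
            linear_combination (norm := module) -l
          exact smul_right_injective A (by norm_num : (2:k) ≠ 0) h2
    · exact step μ hg hf x N h5 IH' i j hi hj hij

/-- Corollary (Albert): an algebra is power associative iff `x²x = xx²` and
`(x²x)x = x²x²` for all `x`. -/
theorem stmt17 (μ : A →ₗ[k] A →ₗ[k] A) :
    IsPowerAssoc μ ↔
      ∀ x : A, μ (μ x x) x = μ x (μ x x) ∧
        μ (μ (μ x x) x) x = μ (μ x x) (μ x x) := by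
  constructor
  · intro h x
    constructor
    · exact h x 3 2 (by norm_num) (by norm_num) (by norm_num)
    · exact h x 4 2 (by norm_num) (by norm_num) (by norm_num)
  · intro h x n i hn hi hin
    have hg : ∀ z : A, μ (μ z z) z = μ z (μ z z) := fun z => (h z).1
    have hf : ∀ z : A, μ (μ (μ z z) z) z = μ (μ z z) (μ z z) := fun z => (h z).2
    exact (albert_pow_add μ hg hf x n (n - i) i (by omega) hi (by omega)).symm
end
end
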